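/- arXiv:2507.17947 — 4 statements merged into one kernel-verified Lean document; each statement's English description precedes it below -/
import Mathlib

section
/- An ascent sequence avoids the pattern 021 if and only if the subsequence consisting of its positive letters is nondecreasing. -/
open PowerSeries

/-- Number of ascents of a word. -/
def ascN (w : List ℕ) : ℕ := ((w.zip w.tail).filter (fun p => decide (p.1 < p.2))).length

/-- `w` is an ascent sequence. -/
def IsAscentSeq (w : List ℕ) : Prop :=
  (w ≠ [] → w.headD 0 = 0) ∧
  ∀ i, 0 < i → i < w.length → w.getD i 0 ≤ ascN (w.take i) + 1

/-- `w` contains the pattern `τ` (classical pattern containment). -/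
def ContainsPat (w τ : List ℕ) : Prop :=
  ∃ s : List ℕ, s.Sublist w ∧ s.length = τ.length ∧
    ∀ j k, j < τ.length → k < τ.length →
      ((s.getD j 0 < s.getD k 0 ↔ τ.getD j 0 < τ.getD k 0) ∧
       (s.getD j 0 = s.getD k 0 ↔ τ.getD j 0 = τ.getD k 0))

def AvoidsPat (w τ : List ℕ) : Prop := ¬ ContainsPat w τ

/-- Ascent sequences of length `n` avoiding `021` and the pattern `τ`. -/
def BSet (n : ℕ) (τ : List ℕ) : Set (List ℕ) :=
  {w | w.length = n ∧ IsAscentSeq w ∧ AvoidsPat w [0,2,1] ∧ AvoidsPat w τ}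

/-- Staircase word: each letter equals or is one more than the previous. -/
def IsStaircase (w : List ℕ) : Prop := w.Chain' (fun a b => b = a ∨ b = a + 1)

/-- Number of jumps of a nondecreasing word starting with 0. -/
def JumpCount (w : List ℕ) : ℕ := w.foldr max 0 + 1 - w.toFinset.card

/-- Nondecreasing words of length `n` starting with 0 with at most `r` jumps. -/
def NDSet (n r : ℕ) : Set (List ℕ) :=
  {w | w.length = n ∧ w ≠ [] ∧ w.headD 0 = 0 ∧ List.Pairwise (· ≤ ·) w ∧ JumpCount w ≤ r}

/-- An ascent sequence avoids 021 iff its subsequence of positive letters is nondecreasing. -/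
theorem avoids021_iff_pos_sorted (w : List ℕ) (hw : IsAscentSeq w) :
    AvoidsPat w [0,2,1] ↔ List.Pairwise (· ≤ ·) (w.filter (fun x => decide (0 < x))) := by
  constructor
  · intro hav
    rw [List.pairwise_iff_forall_sublist]
    intro b c hbc
    by_contra hlt
    push_neg at hlt
    have hbf : b ∈ w.filter (fun x => decide (0 < x)) := hbc.subset (by simp)
    have hcf : c ∈ w.filter (fun x => decide (0 < x)) := hbc.subset (by simp)
    have hb : 0 < b := by simpa using (List.of_mem_filter hbf)
    have hc : 0 < c := by simpa using (List.of_mem_filter hcf)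
    have hsub : [b, c].Sublist w := hbc.trans (List.filter_sublist (l := w))
    obtain ⟨x, t, rfl⟩ : ∃ x t, w = x :: t := by
      cases w with
      | nil => simp at hsub
      | cons x t => exact ⟨x, t, rfl⟩
    have hx0 : x = 0 := by simpa using hw.1 (by simp)
    subst hx0
    have ht : [b, c].Sublist t := by
      rcases List.sublist_cons_iff.mp hsub with h | ⟨r, hr, hrt⟩
      · exact h
      · injection hr with h1 h2
        omega
    apply hav
    refine ⟨[0, b, c], ?_, rfl, ?_⟩
    · exact (ht.cons₂ 0)
    · intro j k hj hk
      simp only [List.length_cons, List.length_nil] at hj hk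
      interval_cases j <;> interval_cases k <;>
        simp [List.getD] <;> omega
  · intro hsorted hcon
    obtain ⟨s, hsub, hlen, hrel⟩ := hcon
    rcases s with _ | ⟨a, _ | ⟨b, _ | ⟨c, _ | ⟨d, s⟩⟩⟩⟩ <;> simp at hlen
    have h01 := hrel 0 1 (by norm_num) (by norm_num)
    have h02 := hrel 0 2 (by norm_num) (by norm_num)
    have h21 := hrel 2 1 (by norm_num) (by norm_num)
    simp [List.getD] at h01 h02 h21
    have hab : a < b := by omega
    have hac : a < c := by omega
    have hcb : c < b := by omega
    have hb : 0 < b := by omega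
    have hc : 0 < c := by omega
    have hbcsub : [b, c].Sublist ([a, b, c] : List ℕ) := by
      exact (List.sublist_cons_self a [b,c]).trans (by simp)
    have hfilt : [b, c].Sublist (w.filter (fun x => decide (0 < x))) := by
      have := (hbcsub.trans hsub).filter (fun x => decide (0 < x))
      simpa [hb, hc] using this
    have := List.pairwise_iff_forall_sublist.mp hsorted hfilt
    omega
end

section
/- For every n ≥ 1 and r ≥ 0, there is a bijection between the set of (r+1)-tuples (w^{(0)}, …, w^{(r)}) of total length n, where w^{(0)} is a nonempty staircase word starting at 0 and each w^{(i)} for i ≥ 1 is an empty word or a staircase word starting at 0, and the set of nondecreasing sequences of length n starting with 0 having at most r jumps. -/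
open PowerSeries

def TupleSet (n r : ℕ) : Set (Fin (r+1) → List ℕ) :=
  {t | (t 0 ≠ [] ∧ IsStaircase (t 0) ∧ (t 0).headD 0 = 0) ∧
       (∀ i : Fin (r+1), i ≠ 0 → (t i = [] ∨ (t i ≠ [] ∧ IsStaircase (t i) ∧ (t i).headD 0 = 0))) ∧
       (∑ i, (t i).length) = n}

/-! ### Auxiliary definitions for the bijection -/

def diffs (w : List ℕ) : List ℕ := List.zipWith (fun a b => b - a) w w.tail

def stair (d : List ℕ) : List ℕ := List.scanl (· + ·) 0 d

def Good (p : List ℕ) : Prop := p ≠ [] ∧ IsStaircase p ∧ p.headD 0 = 0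

def encR : ℕ → List (List ℕ) → List ℕ
  | _, [] => []
  | e, [] :: ps => encR (e+1) ps
  | e, (a :: q) :: ps => (e+2) :: (diffs (a :: q) ++ encR 0 ps)

def encAll : List (List ℕ) → List ℕ
  | [] => []
  | p :: ps => diffs p ++ encR 0 ps

def dec : List ℕ → List (List ℕ)
  | [] => [[0]]
  | x :: d => if x ≤ 1 then (0 :: ((dec d).headD []).map (· + x)) :: (dec d).tail
              else [0] :: (List.replicate (x-2) [] ++ dec d)

def decC : List ℕ → List (List ℕ)
  | [] => []
  | v :: d => List.replicate (v-2) [] ++ dec d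

def DSet (n r : ℕ) : Set (List ℕ) := {d | d.length + 1 = n ∧ (d.map (· - 1)).sum ≤ r}

@[simp] lemma diffs_nil : diffs [] = [] := rfl

@[simp] lemma diffs_single (a : ℕ) : diffs [a] = [] := rfl

@[simp] lemma diffs_cons (a b : ℕ) (l : List ℕ) :
    diffs (a :: b :: l) = (b - a) :: diffs (b :: l) := rfl

lemma scanl_shift (d : List ℕ) : ∀ a b, List.scanl (·+·) (a + b) d
    = (List.scanl (·+·) a d).map (· + b) := by
  induction d with
  | nil => intro a b; simp
  | cons x d ih =>
      intro a b
      simp only [List.scanl_cons, List.map_cons, List.map_nil, List.cons_append,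
        List.nil_append, List.singleton_append]
      have : a + b + x = (a + x) + b := by ring
      rw [this, ih]

@[simp] lemma stair_nil : stair [] = [0] := rfl

lemma stair_cons (x : ℕ) (d : List ℕ) :
    stair (x :: d) = 0 :: (stair d).map (· + x) := by
  simp only [stair, List.scanl_cons, List.singleton_append]
  congr 1
  have : 0 + x = 0 + x := rfl
  rw [show (0 + x : ℕ) = 0 + x from rfl, scanl_shift]

lemma diffs_scanl (d : List ℕ) : ∀ a, diffs (List.scanl (·+·) a d) = d := by
  induction d with
  | nil => intro a; rfl
  | cons x d ih =>
      intro a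
      simp only [List.scanl_cons, List.singleton_append]
      cases d with
      | nil => simp [diffs]
      | cons y d' =>
          have h := ih (a + x)
          simp only [List.scanl_cons, List.singleton_append] at h ⊢
          rw [diffs_cons, h]
          simp

@[simp] lemma diffs_stair (d : List ℕ) : diffs (stair d) = d := diffs_scanl d 0

lemma stair_diffs_aux (l : List ℕ) : ∀ a, List.Chain' (· ≤ ·) (a :: l) →
    List.scanl (·+·) a (diffs (a :: l)) = a :: l := by
  induction l with
  | nil => intro a _; rfl
  | cons b l ih =>
      intro a h
      have hab : a ≤ b := (List.isChain_cons_cons.mp h).1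
      rw [diffs_cons, List.scanl_cons]
      have : a + (b - a) = b := by omega
      rw [this, ih b (List.isChain_cons_cons.mp h).2]

lemma stair_diffs (w : List ℕ) (hne : w ≠ []) (h0 : w.headD 0 = 0)
    (hs : List.Pairwise (· ≤ ·) w) : stair (diffs w) = w := by
  cases w with
  | nil => simp at hne
  | cons a l =>
      simp only [List.headD_cons] at h0
      subst h0
      exact stair_diffs_aux l 0 (List.isChain_iff_pairwise.mpr hs)

lemma foldr_max_scanl (d : List ℕ) : ∀ a, (List.scanl (·+·) a d).foldr max 0 = a + d.sum := by
  induction d with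
  | nil => intro a; simp
  | cons x d ih => intro a; simp only [List.scanl_cons, List.singleton_append,
      List.foldr_cons, ih (a+x), List.sum_cons]; omega

lemma mem_scanl_ge (d : List ℕ) : ∀ a y, y ∈ List.scanl (·+·) a d → a ≤ y := by
  induction d with
  | nil => intro a y hy; simp at hy; omega
  | cons x d ih =>
      intro a y hy
      simp only [List.scanl_cons, List.singleton_append, List.mem_cons] at hy
      rcases hy with h | h
      · omega
      · have := ih (a+x) y h; omega

lemma card_toFinset_scanl (d : List ℕ) :
    ∀ a, (List.scanl (·+·) a d).toFinset.card = 1 + (d.filter (· ≠ 0)).length := by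
  induction d with
  | nil => intro a; simp
  | cons x d ih =>
      intro a
      simp only [List.scanl_cons, List.singleton_append, List.toFinset_cons]
      by_cases hx : x = 0
      · subst hx
        have ha : a ∈ List.scanl (·+·) (a+0) d := by
          cases d <;> simp [List.scanl_cons]
        rw [Finset.insert_eq_self.mpr (List.mem_toFinset.mpr ha), ih]
        simp
      · have ha : a ∉ (List.scanl (·+·) (a+x) d).toFinset := by
          intro h
          have := mem_scanl_ge d (a+x) a (List.mem_toFinset.mp h)
          omega
        rw [Finset.card_insert_of_notMem ha, ih]
        have : (List.filter (fun y => y ≠ 0) (x :: d)).length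
            = (List.filter (fun y => y ≠ 0) d).length + 1 := by
          simp [List.filter_cons, hx]
        rw [this]; omega

lemma sum_map_sub_one (d : List ℕ) :
    (d.map (· - 1)).sum + (d.filter (· ≠ 0)).length = d.sum := by
  induction d with
  | nil => simp
  | cons x d ih =>
      simp only [List.map_cons, List.sum_cons, List.filter_cons]
      by_cases hx : x = 0
      · subst hx; simpa using ih
      · have h1 : (decide ¬x = 0) = true := by simp [hx]
        simp only [decide_not, h1, if_true, List.length_cons]
        simp only [decide_not] at ih
        omega

lemma jumpCount_stair (d : List ℕ) : JumpCount (stair d) = (d.map (· - 1)).sum := by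
  unfold JumpCount stair
  rw [foldr_max_scanl, card_toFinset_scanl]
  have := sum_map_sub_one d
  omega

lemma chain'_le_scanl (d : List ℕ) : ∀ a, List.Chain' (· ≤ ·) (List.scanl (·+·) a d) := by
  induction d with
  | nil => intro a; exact List.isChain_singleton a
  | cons x d ih =>
      intro a
      simp only [List.scanl_cons, List.singleton_append]
      rw [List.Chain', List.isChain_cons]
      refine ⟨?_, ih (a+x)⟩
      intro y hy
      cases d <;> simp [List.scanl_cons] at hy <;> omega

lemma sorted_stair (d : List ℕ) : List.Pairwise (· ≤ ·) (stair d) :=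
  List.isChain_iff_pairwise.mp (chain'_le_scanl d 0)

lemma staircase_scanl (d : List ℕ) (h : ∀ x ∈ d, x ≤ 1) :
    ∀ a, List.Chain' (fun a b => b = a ∨ b = a + 1) (List.scanl (·+·) a d) := by
  induction d with
  | nil => intro a; exact List.isChain_singleton a
  | cons x d ih =>
      intro a
      simp only [List.scanl_cons, List.singleton_append]
      rw [List.Chain', List.isChain_cons]
      refine ⟨?_, ih (fun y hy => h y (List.mem_cons_of_mem _ hy)) (a+x)⟩
      intro y hy
      have hx : x ≤ 1 := h x (List.mem_cons_self)
      cases d <;> simp [List.scanl_cons] at hy <;> omega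

lemma staircase_stair (d : List ℕ) (h : ∀ x ∈ d, x ≤ 1) : IsStaircase (stair d) :=
  staircase_scanl d h 0

lemma diffs_le_one (w : List ℕ) (h : IsStaircase w) : ∀ x ∈ diffs w, x ≤ 1 := by
  induction w with
  | nil => intro x hx; exact absurd hx (by simp [diffs])
  | cons a l ih =>
      cases l with
      | nil => intro x hx; exact absurd hx (by simp [diffs])
      | cons b l' =>
          intro x hx
          unfold IsStaircase at h
          rw [List.Chain', List.isChain_cons_cons] at h
          simp only [show diffs (a :: b :: l') = (b-a) :: diffs (b :: l') from rfl,
            List.mem_cons] at hx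
          rcases hx with h1 | h1
          · rcases h.1 with h2 | h2 <;> omega
          · exact ih h.2 x h1

lemma staircase_le (w : List ℕ) (h : IsStaircase w) : List.Chain' (· ≤ ·) w := by
  unfold IsStaircase at h
  exact h.imp (fun hab => by omega)

lemma dec_ne_nil (d : List ℕ) : dec d ≠ [] := by
  cases d with
  | nil => simp [dec]
  | cons x d => by_cases h : x ≤ 1 <;> simp [dec, h]

lemma good_stair (d : List ℕ) (h : ∀ x ∈ d, x ≤ 1) : Good (stair d) := by
  refine ⟨?_, staircase_stair d h, ?_⟩
  · unfold stair; cases d <;> simp [List.scanl_cons]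
  · unfold stair; cases d <;> simp [List.scanl_cons]

lemma dec_small (d : List ℕ) (h : ∀ x ∈ d, x ≤ 1) : dec d = [stair d] := by
  induction d with
  | nil => rfl
  | cons x d ih =>
      have hx : x ≤ 1 := h x (List.mem_cons_self)
      rw [dec, if_pos hx, ih (fun y hy => h y (List.mem_cons_of_mem _ hy))]
      simp [stair_cons]

lemma dec_append_small (d1 d2 : List ℕ) (h1 : ∀ x ∈ d1, x ≤ 1)
    (h2 : d2 = [] ∨ ∃ v d', d2 = v :: d' ∧ 2 ≤ v) :
    dec (d1 ++ d2) = stair d1 :: decC d2 := by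
  induction d1 with
  | nil =>
      rcases h2 with rfl | ⟨v, d', rfl, hv⟩
      · simp [dec, decC, stair]
      · simp only [List.nil_append]
        rw [dec, if_neg (by omega)]
        rfl
  | cons x d1 ih =>
      have hx : x ≤ 1 := h1 x (List.mem_cons_self)
      have ihh := ih (fun y hy => h1 y (List.mem_cons_of_mem _ hy))
      rw [List.cons_append, dec, if_pos hx, ihh]
      simp [stair_cons]

lemma dec_head_good (d : List ℕ) : Good ((dec d).headD []) := by
  induction d with
  | nil => exact good_stair [] (by simp)
  | cons x d ih =>
      by_cases hx : x ≤ 1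
      · rw [dec, if_pos hx]
        obtain ⟨hne, hst, hh⟩ := ih
        refine ⟨by simp, ?_, by simp⟩
        · obtain ⟨a, q, hq⟩ := List.exists_cons_of_ne_nil hne
          rw [hq]
          have ha : a = 0 := by rw [hq] at hh; simpa using hh
          subst ha
          simp only [List.headD_cons, List.map_cons]
          unfold IsStaircase at hst ⊢
          rw [hq] at hst
          rw [List.Chain', List.isChain_cons]
          constructor
          · intro y hy
            cases q <;> simp at hy <;> omega
          · have : List.Chain' (fun a b => b = a ∨ b = a + 1) ((0 :: q).map (· + x)) := by
              apply List.isChain_map_of_isChain _ _ hst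
              intro a b hab
              rcases hab with h | h <;> [left; right] <;> omega
            simpa [List.Chain'] using this
      · rw [dec, if_neg hx]
        exact good_stair [] (by simp)

lemma dec_cons_eq (d : List ℕ) : dec d = (dec d).headD [] :: (dec d).tail := by
  have := dec_ne_nil d
  cases h : dec d with
  | nil => exact absurd h this
  | cons p ps => simp

lemma dec_forall_good (d : List ℕ) : ∀ p ∈ dec d, p = [] ∨ Good p := by
  induction d with
  | nil =>
      intro p hp
      simp [dec] at hp
      subst hp
      exact Or.inr (good_stair [] (by simp))
  | cons x d ih =>
      by_cases hx : x ≤ 1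
      · rw [dec, if_pos hx]
        intro p hp
        rcases List.mem_cons.mp hp with rfl | hp
        · right
          have h := dec_head_good (x :: d)
          rw [dec, if_pos hx] at h
          simpa using h
        · exact ih p (List.mem_of_mem_tail hp)
      · rw [dec, if_neg hx]
        intro p hp
        rcases List.mem_cons.mp hp with rfl | hp
        · exact Or.inr (good_stair [] (by simp))
        · rcases List.mem_append.mp hp with h | h
          · left; exact List.eq_of_mem_replicate h
          · exact ih p h

lemma diffs_map_add (l : List ℕ) (x : ℕ) : diffs (l.map (· + x)) = diffs l := by
  induction l with
  | nil => rfl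
  | cons a l ih =>
      cases l with
      | nil => rfl
      | cons b l' =>
          simp only [List.map_cons] at ih ⊢
          show (b + x - (a + x)) :: diffs ((b :: l').map (· + x)) = (b - a) :: diffs (b :: l')
          rw [show b + x - (a + x) = b - a by omega]
          simpa using ih

lemma encR_replicate_append (k : ℕ) (ps : List (List ℕ)) :
    ∀ e, encR e (List.replicate k [] ++ ps) = encR (e + k) ps := by
  induction k with
  | zero => intro e; rfl
  | succ k ih =>
      intro e
      rw [List.replicate_succ, List.cons_append]
      show encR (e+1) (List.replicate k [] ++ ps) = _
      rw [ih (e+1)]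
      congr 1
      omega

lemma encR_head (ps : List (List ℕ)) :
    ∀ e, encR e ps = [] ∨ ∃ v d', encR e ps = v :: d' ∧ 2 ≤ v := by
  induction ps with
  | nil => intro e; exact Or.inl rfl
  | cons p ps ih =>
      intro e
      cases p with
      | nil => exact ih (e+1)
      | cons a q => exact Or.inr ⟨e+2, _, rfl, by omega⟩

lemma encR_eq_nil (ps : List (List ℕ)) : ∀ e, encR e ps = [] → ∀ p ∈ ps, p = [] := by
  induction ps with
  | nil => simp
  | cons p ps ih =>
      intro e he q hq
      cases p with
      | nil =>
          rcases List.mem_cons.mp hq with rfl | hq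
          · rfl
          · exact ih (e+1) he q hq
      | cons a q' => simp [encR] at he

lemma stair_diffs_good (p : List ℕ) (h : Good p) : stair (diffs p) = p := by
  obtain ⟨hne, hst, hh⟩ := h
  exact stair_diffs p hne hh (List.isChain_iff_pairwise.mp (staircase_le p hst))

lemma encAll_dec (d : List ℕ) : encAll (dec d) = d := by
  induction d with
  | nil => rfl
  | cons x d ih =>
      by_cases hx : x ≤ 1
      · rw [dec, if_pos hx]
        obtain ⟨hne, hst, hh⟩ := dec_head_good d
        obtain ⟨a, q, hq⟩ := List.exists_cons_of_ne_nil hne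
        have ha : a = 0 := by rw [hq] at hh; simpa using hh
        subst ha
        rw [hq]
        show diffs (0 :: (0 :: q).map (· + x)) ++ encR 0 (dec d).tail = x :: d
        have h1 : diffs (0 :: (0 :: q).map (· + x)) = x :: diffs (0 :: q) := by
          have hm := diffs_map_add (0 :: q) x
          have hmap : (0 :: q).map (· + x) = x :: q.map (· + x) := by simp
          rw [hmap] at hm ⊢
          show (x - 0) :: diffs (x :: q.map (· + x)) = x :: diffs (0 :: q)
          rw [Nat.sub_zero, hm]
        rw [h1]
        have h2 : encAll (dec d) = d := ih
        have h3 : dec d = (0 :: q) :: (dec d).tail := by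
          rw [← hq]; exact dec_cons_eq d
        rw [h3] at h2
        show x :: (diffs (0 :: q) ++ encR 0 (dec d).tail) = x :: d
        exact congrArg (List.cons x) h2
      · rw [dec, if_neg hx]
        show diffs [0] ++ encR 0 (List.replicate (x-2) [] ++ dec d) = x :: d
        rw [show diffs [0] = [] from rfl, List.nil_append, encR_replicate_append]
        obtain ⟨hne, hst, hh⟩ := dec_head_good d
        obtain ⟨a, q, hq⟩ := List.exists_cons_of_ne_nil hne
        have h3 : dec d = (a :: q) :: (dec d).tail := by
          rw [← hq]; exact dec_cons_eq d
        rw [h3]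
        show (0 + (x-2) + 2) :: (diffs (a :: q) ++ encR 0 (dec d).tail) = x :: d
        rw [show 0 + (x-2) + 2 = x from by omega]
        have h2 : encAll (dec d) = d := ih
        rw [h3] at h2
        exact congrArg (List.cons x) h2

lemma getD_replicate_nil (e i : ℕ) : (List.replicate e ([] : List ℕ)).getD i [] = [] := by
  by_cases h : i < e
  · rw [List.getD_eq_getElem _ _ (by simpa using h)]
    exact List.eq_of_mem_replicate (List.getElem_mem _)
  · exact List.getD_eq_default _ _ (by simpa using Nat.le_of_not_lt h)

lemma decC_encR (ps : List (List ℕ)) (hv : ∀ p ∈ ps, p = [] ∨ Good p) :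
    ∀ e i, (decC (encR e ps)).getD i [] = (List.replicate e [] ++ ps).getD i [] := by
  induction ps with
  | nil =>
      intro e i
      show (decC []).getD i [] = _
      simp only [decC, List.append_nil]
      rw [getD_replicate_nil]
      rfl
  | cons p ps ih =>
      intro e i
      cases p with
      | nil =>
          have h1 : encR e ([] :: ps) = encR (e+1) ps := rfl
          rw [h1, ih (fun q hq => hv q (List.mem_cons_of_mem _ hq)) (e+1) i]
          congr 1
          rw [List.replicate_succ', List.append_assoc]
          rfl
      | cons a q =>
          have hg : Good (a :: q) := by
            rcases hv (a :: q) (List.mem_cons_self) with h | h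
            · simp at h
            · exact h
          have h1 : encR e ((a :: q) :: ps) = (e+2) :: (diffs (a :: q) ++ encR 0 ps) := rfl
          rw [h1]
          show (List.replicate (e+2-2) [] ++ dec (diffs (a :: q) ++ encR 0 ps)).getD i []
              = _
          rw [show e+2-2 = e from by omega,
            dec_append_small _ _ (diffs_le_one _ hg.2.1) (encR_head ps 0),
            stair_diffs_good _ hg]
          by_cases hi : i < e
          · rw [List.getD_append _ _ _ _ (by simpa using hi),
              List.getD_append _ _ _ _ (by simpa using hi)]
          · rw [List.getD_append_right _ _ _ _ (by simpa using Nat.le_of_not_lt hi),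
              List.getD_append_right _ _ _ _ (by simpa using Nat.le_of_not_lt hi)]
            simp only [List.length_replicate]
            cases hj : i - e with
            | zero => rfl
            | succ j =>
                show (decC (encR 0 ps)).getD j [] = ps.getD j []
                have := ih (fun q hq => hv q (List.mem_cons_of_mem _ hq)) 0 j
                simpa using this

lemma dec_encAll (p : List ℕ) (ps : List (List ℕ)) (h0 : Good p)
    (hv : ∀ q ∈ ps, q = [] ∨ Good q) :
    ∀ i, (dec (encAll (p :: ps))).getD i [] = (p :: ps).getD i [] := by
  intro i
  show (dec (diffs p ++ encR 0 ps)).getD i [] = _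
  rw [dec_append_small _ _ (diffs_le_one _ h0.2.1) (encR_head ps 0),
    stair_diffs_good _ h0]
  cases i with
  | zero => rfl
  | succ j =>
      show (decC (encR 0 ps)).getD j [] = ps.getD j []
      simpa using decC_encR ps hv 0 j

lemma diffs_length (w : List ℕ) : (diffs w).length = w.length - 1 := by
  cases w with
  | nil => rfl
  | cons a l => simp [diffs]

lemma sum_lengths_dec (d : List ℕ) : ((dec d).map List.length).sum = d.length + 1 := by
  induction d with
  | nil => rfl
  | cons x d ih =>
      by_cases hx : x ≤ 1
      · rw [dec, if_pos hx]
        have h := dec_cons_eq d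
        rw [h] at ih
        simp only [List.map_cons, List.sum_cons, List.length_cons, List.length_map] at ih ⊢
        omega
      · rw [dec, if_neg hx]
        simp only [List.map_cons, List.sum_cons, List.map_append, List.sum_append,
          List.map_replicate, List.length_nil, List.sum_replicate, smul_eq_mul,
          Nat.mul_zero, List.length_cons]
        omega

lemma length_dec (d : List ℕ) : (dec d).length = 1 + (d.map (· - 1)).sum := by
  induction d with
  | nil => rfl
  | cons x d ih =>
      by_cases hx : x ≤ 1
      · rw [dec, if_pos hx]
        have h := dec_cons_eq d
        rw [h] at ih
        simp only [List.length_cons, List.map_cons, List.sum_cons] at ih ⊢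
        have : x - 1 = 0 := by omega
        omega
      · rw [dec, if_neg hx]
        simp only [List.length_cons, List.length_append, List.length_replicate,
          List.map_cons, List.sum_cons]
        omega

lemma length_encR (ps : List (List ℕ)) (hv : ∀ p ∈ ps, p = [] ∨ Good p) :
    ∀ e, (encR e ps).length = (ps.map List.length).sum := by
  induction ps with
  | nil => intro e; rfl
  | cons p ps ih =>
      intro e
      cases p with
      | nil =>
          show (encR (e+1) ps).length = _
          rw [ih (fun q hq => hv q (List.mem_cons_of_mem _ hq)) (e+1)]
          simp
      | cons a q =>
          show ((e+2) :: (diffs (a :: q) ++ encR 0 ps)).length = _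
          simp only [List.length_cons, List.length_append, diffs_length,
            List.map_cons, List.sum_cons]
          rw [ih (fun q hq => hv q (List.mem_cons_of_mem _ hq)) 0]
          simp
          omega

lemma sum_map_sub_one_zero (l : List ℕ) (h : ∀ x ∈ l, x ≤ 1) :
    (l.map (· - 1)).sum = 0 := by
  induction l with
  | nil => rfl
  | cons x l ih =>
      simp only [List.map_cons, List.sum_cons]
      have hx := h x (List.mem_cons_self)
      rw [ih (fun y hy => h y (List.mem_cons_of_mem _ hy))]
      omega

lemma encR_sum (ps : List (List ℕ)) (hv : ∀ p ∈ ps, p = [] ∨ Good p) :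
    ∀ e, ((encR e ps).map (· - 1)).sum ≤ e + ps.length := by
  induction ps with
  | nil => intro e; simp [encR]
  | cons p ps ih =>
      intro e
      cases p with
      | nil =>
          show ((encR (e+1) ps).map (· - 1)).sum ≤ _
          have := ih (fun q hq => hv q (List.mem_cons_of_mem _ hq)) (e+1)
          simp only [List.length_cons]
          omega
      | cons a q =>
          have hg : Good (a :: q) := by
            rcases hv (a :: q) (List.mem_cons_self) with h | h
            · simp at h
            · exact h
          show (((e+2) :: (diffs (a :: q) ++ encR 0 ps)).map (· - 1)).sum ≤ _
          simp only [List.map_cons, List.sum_cons, List.map_append, List.sum_append]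
          rw [sum_map_sub_one_zero _ (diffs_le_one _ hg.2.1)]
          have := ih (fun q hq => hv q (List.mem_cons_of_mem _ hq)) 0
          simp only [List.length_cons]
          omega

lemma getD_sum (L : List (List ℕ)) : ∀ m, L.length ≤ m →
    ∑ i ∈ Finset.range m, (L.getD i []).length = (L.map List.length).sum := by
  induction L with
  | nil =>
      intro m _
      simp
  | cons p L ih =>
      intro m hm
      cases m with
      | zero => simp at hm
      | succ m =>
          rw [Finset.sum_range_succ' (fun i => ((p :: L).getD i []).length) m]
          simp only [List.getD_cons_succ, List.getD_cons_zero, List.map_cons, List.sum_cons]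
          rw [ih m (by simpa using hm)]
          omega

lemma encR_append_replicate (ps : List (List ℕ)) (k : ℕ) :
    ∀ e, encR e (ps ++ List.replicate k []) = encR e ps := by
  induction ps with
  | nil =>
      intro e
      have := encR_replicate_append k [] e
      simpa [encR] using this
  | cons p ps ih =>
      intro e
      cases p with
      | nil =>
          show encR (e+1) (ps ++ _) = encR (e+1) ps
          exact ih (e+1)
      | cons a q =>
          show (e+2) :: (diffs (a :: q) ++ encR 0 (ps ++ _)) = _
          rw [ih 0]
          rfl

lemma ofFn_getD (L : List (List ℕ)) (m : ℕ) (h : L.length ≤ m) :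
    List.ofFn (fun i : Fin m => L.getD i []) = L ++ List.replicate (m - L.length) [] := by
  apply List.ext_getElem
  · simp; omega
  · intro i h1 h2
    rw [List.getElem_ofFn]
    simp only [Fin.val_mk]
    by_cases hi : i < L.length
    · rw [List.getElem_append_left hi, List.getD_eq_getElem _ _ hi]
    · rw [List.getElem_append_right (by omega), List.getElem_replicate,
        List.getD_eq_default _ _ (by omega)]

lemma dec_getD_zero (d : List ℕ) : (dec d).getD 0 [] = (dec d).headD [] := by
  cases h : dec d with
  | nil => rfl
  | cons p ps => rfl

noncomputable def equivND (n r : ℕ) (hn : 1 ≤ n) : ↥(DSet n r) ≃ ↥(NDSet n r) where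
  toFun d := ⟨stair d.1, by
    obtain ⟨d, hlen, hsum⟩ := d
    refine ⟨?_, ?_, ?_, sorted_stair d, ?_⟩
    · show (List.scanl (· + ·) 0 d).length = n
      rw [List.length_scanl]; exact hlen
    · show List.scanl (· + ·) 0 d ≠ []
      cases d <;> simp [List.scanl_cons]
    · show (List.scanl (· + ·) 0 d).headD 0 = 0
      cases d <;> simp [List.scanl_cons]
    · rw [jumpCount_stair]; exact hsum⟩
  invFun w := ⟨diffs w.1, by
    obtain ⟨w, hlen, hne, hh, hs, hj⟩ := w
    have hpos : 0 < w.length := List.length_pos_iff.mpr hne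
    constructor
    · show (diffs w).length + 1 = n
      rw [diffs_length]; omega
    · show ((diffs w).map (· - 1)).sum ≤ r
      have hw := stair_diffs w hne hh hs
      have h2 := jumpCount_stair (diffs w)
      rw [hw] at h2
      omega⟩
  left_inv d := Subtype.ext (diffs_stair d.1)
  right_inv w := Subtype.ext (stair_diffs w.1 w.2.2.1 w.2.2.2.1 w.2.2.2.2.1)

noncomputable def equivT (n r : ℕ) : ↥(TupleSet n r) ≃ ↥(DSet n r) where
  toFun t := ⟨encAll (List.ofFn t.1), by
    obtain ⟨t, hg, hrest, hsum⟩ := t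
    have hofn : List.ofFn t = t 0 :: List.ofFn (fun i : Fin r => t i.succ) :=
      List.ofFn_succ
    set ps' : List (List ℕ) := List.ofFn (fun i : Fin r => t i.succ) with hps'
    have hv : ∀ q ∈ ps', q = [] ∨ Good q := by
      intro q hq
      rw [hps', List.mem_ofFn] at hq
      obtain ⟨i, rfl⟩ := hq
      exact hrest i.succ (Fin.succ_ne_zero i)
    have hlenps : (ps'.map List.length).sum = ∑ i : Fin r, (t i.succ).length := by
      rw [hps', List.map_ofFn, List.sum_ofFn]
      rfl
    have h0len : 1 ≤ (t 0).length := List.length_pos_iff.mpr hg.1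
    have hsplit : n = (t 0).length + ∑ i : Fin r, (t i.succ).length := by
      rw [← hsum]; exact Fin.sum_univ_succ (fun i => (t i).length)
    have hlenps' : ps'.length = r := by rw [hps', List.length_ofFn]
    constructor
    · rw [hofn]
      show (diffs (t 0) ++ encR 0 ps').length + 1 = n
      rw [List.length_append, diffs_length, length_encR ps' hv 0]
      omega
    · rw [hofn]
      show (((diffs (t 0) ++ encR 0 ps')).map (· - 1)).sum ≤ r
      rw [List.map_append, List.sum_append,
        sum_map_sub_one_zero _ (diffs_le_one _ hg.2.1)]
      have := encR_sum ps' hv 0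
      omega⟩
  invFun d := ⟨fun i => (dec d.1).getD i [], by
    obtain ⟨d, hlen, hsum⟩ := d
    have hL : (dec d).length ≤ r + 1 := by rw [length_dec]; omega
    refine ⟨?_, ?_, ?_⟩
    · show Good ((dec d).getD ((0 : Fin (r+1)) : ℕ) [])
      rw [show ((0 : Fin (r+1)) : ℕ) = 0 from rfl, dec_getD_zero]
      exact dec_head_good d
    · intro i _
      by_cases hi : (i : ℕ) < (dec d).length
      · have := dec_forall_good d ((dec d).getD i [])
        apply this
        rw [List.getD_eq_getElem _ _ hi]
        exact List.getElem_mem _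
      · left
        exact List.getD_eq_default _ _ (Nat.le_of_not_lt hi)
    · show (∑ i : Fin (r+1), ((dec d).getD (i : ℕ) []).length) = n
      rw [Fin.sum_univ_eq_sum_range (fun i => ((dec d).getD i []).length) (r+1),
        getD_sum (dec d) (r+1) hL, sum_lengths_dec]
      omega⟩
  left_inv := by
    rintro ⟨t, hg, hrest, hsum⟩
    apply Subtype.ext
    funext i
    show (dec (encAll (List.ofFn t))).getD (i : ℕ) [] = t i
    rw [List.ofFn_succ (f := t)]
    have hv : ∀ q ∈ List.ofFn (fun i : Fin r => t i.succ), q = [] ∨ Good q := by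
      intro q hq
      rw [List.mem_ofFn] at hq
      obtain ⟨j, rfl⟩ := hq
      exact hrest j.succ (Fin.succ_ne_zero j)
    rw [dec_encAll (t 0) _ hg hv (i : ℕ)]
    rw [← List.ofFn_succ (f := t)]
    have hi : (i : ℕ) < (List.ofFn t).length := by
      rw [List.length_ofFn]; exact i.isLt
    rw [List.getD_eq_getElem _ _ hi, List.getElem_ofFn]
  right_inv := by
    rintro ⟨d, hlen, hsum⟩
    apply Subtype.ext
    show encAll (List.ofFn fun i : Fin (r+1) => (dec d).getD (i : ℕ) []) = d
    have hL : (dec d).length ≤ r + 1 := by rw [length_dec]; omega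
    rw [ofFn_getD _ _ hL]
    obtain ⟨p, ps, hpps⟩ : ∃ p ps, dec d = p :: ps := ⟨_, _, dec_cons_eq d⟩
    rw [hpps]
    show encAll ((p :: ps) ++ List.replicate _ []) = d
    show diffs p ++ encR 0 (ps ++ List.replicate _ []) = d
    rw [encR_append_replicate]
    show encAll (p :: ps) = d
    rw [← hpps]
    exact encAll_dec d

/-- Bijection between staircase tuples of total length `n` and nondecreasing words of
length `n` starting with 0 having at most `r` jumps. -/
theorem tuple_equiv_ndseq (n r : ℕ) (hn : 1 ≤ n) :
    Nonempty (↥(TupleSet n r) ≃ ↥(NDSet n r)) :=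
  ⟨(equivT n r).trans (equivND n r hn)⟩
end

section
/- For every n ≥ 1, the number of ascent sequences of length n avoiding both 021 and 0101 equals the Fibonacci number F_{2n-1}, where F_1 = F_2 = 1. -/
open PowerSeries

section Aux

def maxL (w : List ℕ) : ℕ := w.foldr max 0

lemma maxL_cons (a : ℕ) (t : List ℕ) : maxL (a :: t) = max a (maxL t) := rfl

lemma le_maxL {x : ℕ} {w : List ℕ} (h : x ∈ w) : x ≤ maxL w := by
  induction w with
  | nil => simp at h
  | cons a t ih =>
    rcases List.mem_cons.1 h with rfl | h
    · simp [maxL_cons]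
    · simp only [maxL_cons]; exact le_trans (ih h) (le_max_right _ _)

lemma maxL_mem {w : List ℕ} (h : 0 < maxL w) : maxL w ∈ w := by
  induction w with
  | nil => simp [maxL] at h
  | cons a t ih =>
    rw [maxL_cons] at h ⊢
    rcases le_total (maxL t) a with h' | h'
    · rw [max_eq_left h']; exact List.mem_cons_self
    · rw [max_eq_right h'] at h ⊢; exact List.mem_cons_of_mem _ (ih h)

lemma maxL_append (u : List ℕ) (c : ℕ) : maxL (u ++ [c]) = max (maxL u) c := by
  induction u with
  | nil => simp [maxL]
  | cons a t ih => simp [maxL_cons, ih, max_assoc]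

lemma ascN_single (a : ℕ) : ascN [a] = 0 := rfl

lemma ascN_cons_cons (a b : ℕ) (l : List ℕ) :
    ascN (a :: b :: l) = (if a < b then 1 else 0) + ascN (b :: l) := by
  simp only [ascN, List.tail_cons, List.zip_cons_cons, List.filter_cons]
  split <;> simp_all <;> omega

lemma ascN_append (u : List ℕ) (hu : u ≠ []) (c : ℕ) :
    ascN (u ++ [c]) = ascN u + (if u.getLast hu < c then 1 else 0) := by
  induction u with
  | nil => simp at hu
  | cons a t ih =>
    cases t with
    | nil =>
      show ascN (a :: c :: []) = _
      rw [ascN_cons_cons, ascN_single, ascN_single, List.getLast_singleton]; omega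
    | cons b t' =>
      show ascN (a :: b :: (t' ++ [c])) = _
      rw [ascN_cons_cons, ascN_cons_cons]
      have h2 : b :: (t' ++ [c]) = (b :: t') ++ [c] := rfl
      rw [h2, ih (by simp)]
      rw [show (a :: b :: t').getLast hu = (b :: t').getLast (by simp) from
        List.getLast_cons (by simp)]
      omega

lemma contains021_iff (w : List ℕ) :
    ContainsPat w [0,2,1] ↔ ∃ x y z, [x,y,z].Sublist w ∧ x < z ∧ z < y := by
  constructor
  · rintro ⟨s, hs, hl, hc⟩
    simp only [List.length_cons, List.length_nil] at hl
    obtain ⟨x, y, z, rfl⟩ := List.length_eq_three.1 hl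
    refine ⟨x, y, z, hs, ?_, ?_⟩
    · have := (hc 0 2 (by norm_num) (by norm_num)).1
      simpa [List.getD] using this
    · have := (hc 2 1 (by norm_num) (by norm_num)).1
      simpa [List.getD] using this
  · rintro ⟨x, y, z, hs, h1, h2⟩
    refine ⟨[x,y,z], hs, rfl, ?_⟩
    intro j k hj hk
    simp only [List.length_cons, List.length_nil] at hj hk
    interval_cases j <;> interval_cases k <;> simp [List.getD] <;> omega

lemma contains0101_iff (w : List ℕ) :
    ContainsPat w [0,1,0,1] ↔ ∃ x y, [x,y,x,y].Sublist w ∧ x < y := by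
  constructor
  · rintro ⟨s, hs, hl, hc⟩
    obtain ⟨a, b, c, d, rfl⟩ : ∃ a b c d, s = [a, b, c, d] := by
      rcases s with _ | ⟨a, _ | ⟨b, _ | ⟨c, _ | ⟨d, t⟩⟩⟩⟩ <;> simp_all
    have e1 : a = c := by
      have := (hc 0 2 (by norm_num) (by norm_num)).2
      simpa [List.getD] using this
    have e2 : b = d := by
      have := (hc 1 3 (by norm_num) (by norm_num)).2
      simpa [List.getD] using this
    have e3 : a < b := by
      have := (hc 0 1 (by norm_num) (by norm_num)).1
      simpa [List.getD] using this
    subst e1; subst e2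
    exact ⟨a, b, hs, e3⟩
  · rintro ⟨x, y, hs, h1⟩
    refine ⟨[x,y,x,y], hs, rfl, ?_⟩
    intro j k hj hk
    simp only [List.length_cons, List.length_nil] at hj hk
    interval_cases j <;> interval_cases k <;> simp [List.getD] <;> omega

lemma isAscentSeq_append {u : List ℕ} (hu : IsAscentSeq u) (h0 : u ≠ []) {c : ℕ}
    (hc : c ≤ ascN u + 1) : IsAscentSeq (u ++ [c]) := by
  constructor
  · intro _
    obtain ⟨a, t, rfl⟩ := List.exists_cons_of_ne_nil h0
    simpa using hu.1 (by simp)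
  · intro i hi hlen
    simp only [List.length_append, List.length_cons, List.length_nil] at hlen
    rcases lt_or_eq_of_le (Nat.lt_succ_iff.1 hlen) with h | h
    · rw [List.getD_append _ _ _ _ h, List.take_append_of_le_length (le_of_lt h)]
      exact hu.2 i hi h
    · rw [h, List.getD_append_right _ _ _ _ (le_refl _), Nat.sub_self,
        List.take_append_of_le_length (le_refl _), List.take_length]
      simpa using hc

lemma isAscentSeq_of_append {u : List ℕ} {c : ℕ} (h : IsAscentSeq (u ++ [c])) (h0 : u ≠ []) :
    IsAscentSeq u ∧ c ≤ ascN u + 1 := by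
  refine ⟨⟨fun _ => ?_, fun i hi hlen => ?_⟩, ?_⟩
  · obtain ⟨a, t, rfl⟩ := List.exists_cons_of_ne_nil h0
    simpa using h.1 (by simp)
  · have := h.2 i hi (by simp; omega)
    rwa [List.getD_append _ _ _ _ hlen, List.take_append_of_le_length (le_of_lt hlen)] at this
  · have := h.2 u.length (List.length_pos_iff.2 h0) (by simp)
    rwa [List.getD_append_right _ _ _ _ (le_refl _), Nat.sub_self,
      List.take_append_of_le_length (le_refl _), List.take_length] at this
end Aux

section Helpers

lemma sublist_concat_cases {s u : List ℕ} {c : ℕ} (h : s.Sublist (u ++ [c])) :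
    s.Sublist u ∨ ∃ t, s = t ++ [c] ∧ t.Sublist u := by
  rcases List.sublist_append_iff.1 h with ⟨l₁, l₂, rfl, h1, h2⟩
  rcases List.sublist_singleton.1 h2 with rfl | rfl
  · left; simpa using h1
  · right; exact ⟨l₁, rfl, h1⟩

lemma avoid021_concat {u : List ℕ} {c : ℕ} (h : AvoidsPat u [0,2,1])
    (hc : c = 0 ∨ maxL u ≤ c) : AvoidsPat (u ++ [c]) [0,2,1] := by
  intro hcon
  obtain ⟨x, y, z, hs, h1, h2⟩ := (contains021_iff _).1 hcon
  rcases sublist_concat_cases hs with hs' | ⟨t, ht, hts⟩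
  · exact h ((contains021_iff _).2 ⟨x, y, z, hs', h1, h2⟩)
  · obtain ⟨rfl, rfl⟩ : t = [x, y] ∧ z = c := by
      rcases t with _ | ⟨a, _ | ⟨b, _ | ⟨d, t⟩⟩⟩ <;> simp_all
    have hy : y ∈ u := hts.subset (by simp)
    have := le_maxL hy
    rcases hc with rfl | hc <;> omega

lemma avoid0101_concat_zero {u : List ℕ} (h : AvoidsPat u [0,1,0,1]) :
    AvoidsPat (u ++ [0]) [0,1,0,1] := by
  intro hcon
  obtain ⟨x, y, hs, h1⟩ := (contains0101_iff _).1 hcon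
  rcases sublist_concat_cases hs with hs' | ⟨t, ht, hts⟩
  · exact h ((contains0101_iff _).2 ⟨x, y, hs', h1⟩)
  · obtain ⟨rfl, hy⟩ : t = [x, y, x] ∧ y = 0 := by
      rcases t with _ | ⟨a, _ | ⟨b, _ | ⟨d, _ | ⟨e, t⟩⟩⟩⟩ <;> simp_all <;> omega
    omega

lemma avoid0101_concat_gt {u : List ℕ} {c : ℕ} (h : AvoidsPat u [0,1,0,1])
    (hc : maxL u < c) : AvoidsPat (u ++ [c]) [0,1,0,1] := by
  intro hcon
  obtain ⟨x, y, hs, h1⟩ := (contains0101_iff _).1 hcon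
  rcases sublist_concat_cases hs with hs' | ⟨t, ht, hts⟩
  · exact h ((contains0101_iff _).2 ⟨x, y, hs', h1⟩)
  · obtain ⟨rfl, rfl⟩ : t = [x, y, x] ∧ y = c := by
      rcases t with _ | ⟨a, _ | ⟨b, _ | ⟨d, _ | ⟨e, t⟩⟩⟩⟩ <;> simp_all <;> omega
    have hy : y ∈ u := hts.subset (by simp)
    have := le_maxL hy
    omega

lemma avoid0101_concat_rep {v : List ℕ} {m : ℕ} (h : AvoidsPat (v ++ [m]) [0,1,0,1])
    (hm : maxL (v ++ [m]) = m) : AvoidsPat ((v ++ [m]) ++ [m]) [0,1,0,1] := by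
  intro hcon
  obtain ⟨x, y, hs, h1⟩ := (contains0101_iff _).1 hcon
  rcases sublist_concat_cases hs with hs' | ⟨t, ht, hts⟩
  · exact h ((contains0101_iff _).2 ⟨x, y, hs', h1⟩)
  · obtain ⟨rfl, rfl⟩ : t = [x, y, x] ∧ y = m := by
      rcases t with _ | ⟨a, _ | ⟨b, _ | ⟨d, _ | ⟨e, t⟩⟩⟩⟩ <;> simp_all <;> omega
    rcases sublist_concat_cases hts with hts' | ⟨t', ht', _⟩
    · exact h ((contains0101_iff _).2 ⟨x, y, hts'.append (List.Sublist.refl [y]), h1⟩)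
    · obtain ⟨-, rfl⟩ : t' = [x, y] ∧ x = y := by
        rcases t' with _ | ⟨a, _ | ⟨b, _ | ⟨d, t'⟩⟩⟩ <;> simp_all
      omega

lemma headD_concat {u : List ℕ} (h : u ≠ []) (c : ℕ) : (u ++ [c]).headD 0 = u.headD 0 := by
  obtain ⟨a, t, rfl⟩ := List.exists_cons_of_ne_nil h
  rfl

end Helpers

section ABdef

def AB : ℕ → Finset (List ℕ) × Finset (List ℕ)
  | 0 => ({[0]}, ∅)
  | n+1 =>
    (((AB n).1 ∪ (AB n).2).image (fun u => u ++ [0]),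
     ((AB n).1 ∪ (AB n).2).image (fun u => u ++ [maxL u + 1]) ∪
       (AB n).2.image (fun u => u ++ [maxL u]))

def Sfin (n : ℕ) : Finset (List ℕ) := (AB n).1 ∪ (AB n).2

lemma inv (n : ℕ) : ∀ w ∈ Sfin n,
    w.length = n+1 ∧ w.headD 0 = 0 ∧ IsAscentSeq w ∧ ascN w = maxL w ∧
    AvoidsPat w [0,2,1] ∧ AvoidsPat w [0,1,0,1] ∧
    (w ∈ (AB n).1 → ∃ u, w = u ++ [0]) ∧
    (w ∈ (AB n).2 → ∃ u, w = u ++ [maxL w] ∧ 0 < maxL w) := by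
  induction n with
  | zero =>
    intro w hw
    have hw' : w = [0] := by simpa [Sfin, AB] using hw
    subst hw'
    refine ⟨rfl, rfl, ⟨fun _ => rfl, fun i hi hlen => by simp at hlen; omega⟩, rfl, ?_, ?_,
      fun _ => ⟨[], rfl⟩, fun h => by simp [AB] at h⟩
    · intro hcon
      obtain ⟨x, y, z, hs, -, -⟩ := (contains021_iff _).1 hcon
      have := hs.length_le; simp at this
    · intro hcon
      obtain ⟨x, y, hs, -⟩ := (contains0101_iff _).1 hcon
      have := hs.length_le; simp at this
  | succ n ih =>
    intro w hw
    have h7 : w ∈ (AB (n+1)).1 → ∃ u, w = u ++ [0] := by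
      intro hw1
      simp only [AB, Finset.mem_image] at hw1
      obtain ⟨u, -, rfl⟩ := hw1
      exact ⟨u, rfl⟩
    have h8 : w ∈ (AB (n+1)).2 → ∃ u, w = u ++ [maxL w] ∧ 0 < maxL w := by
      intro hw2
      simp only [AB, Finset.mem_union, Finset.mem_image] at hw2
      rcases hw2 with ⟨u, -, rfl⟩ | ⟨u, hu, rfl⟩
      · have he : maxL (u ++ [maxL u + 1]) = maxL u + 1 := by rw [maxL_append]; omega
        exact ⟨u, by rw [he], by omega⟩
      · obtain ⟨-, -, -, -, -, -, -, hB⟩ := ih u (Finset.mem_union_right _ hu)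
        obtain ⟨v, hv, hm⟩ := hB hu
        have he : maxL (u ++ [maxL u]) = maxL u := by rw [maxL_append]; omega
        exact ⟨u, by rw [he], by rw [he]; exact hm⟩
    rcases Finset.mem_union.1 hw with h | h
    · -- zero append case
      simp only [AB, Finset.mem_image] at h
      obtain ⟨u, hu, rfl⟩ := h
      obtain ⟨hlen, hhead, hasc, hax, hv1, hv2, -, -⟩ := ih u hu
      have hne : u ≠ [] := by intro h'; rw [h'] at hlen; simp at hlen
      refine ⟨by simp [hlen], by rw [headD_concat hne]; exact hhead,
        isAscentSeq_append hasc hne (by omega), ?_,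
        avoid021_concat hv1 (Or.inl rfl), avoid0101_concat_zero hv2, h7, h8⟩
      rw [ascN_append u hne 0, maxL_append, if_neg (by omega)]
      omega
    · simp only [AB, Finset.mem_union, Finset.mem_image] at h
      rcases h with ⟨u, hu, rfl⟩ | ⟨u, hu, rfl⟩
      · -- max+1 append case
        obtain ⟨hlen, hhead, hasc, hax, hv1, hv2, -, -⟩ := ih u (by rw [Sfin]; exact Finset.mem_union.2 hu)
        have hne : u ≠ [] := by intro h'; rw [h'] at hlen; simp at hlen
        have hgl : u.getLast hne ≤ maxL u := le_maxL (List.getLast_mem hne)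
        refine ⟨by simp [hlen], by rw [headD_concat hne]; exact hhead,
          isAscentSeq_append hasc hne (by omega), ?_,
          avoid021_concat hv1 (Or.inr (by omega)), avoid0101_concat_gt hv2 (by omega), h7, h8⟩
        rw [ascN_append u hne, maxL_append, if_pos (by omega)]
        omega
      · -- repeat-max append case
        obtain ⟨hlen, hhead, hasc, hax, hv1, hv2, -, hB⟩ := ih u (Finset.mem_union_right _ hu)
        obtain ⟨v, hv, hm⟩ := hB hu
        have hne : u ≠ [] := by intro h'; rw [h'] at hlen; simp at hlen
        have hgl : u.getLast hne = maxL u := by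
          have h1 : u.getLast? = some (maxL u) := by
            conv_lhs => rw [hv]
            exact List.getLast?_concat
          have h2 : u.getLast? = some (u.getLast hne) := List.getLast?_eq_getLast hne
          rw [h1] at h2; exact (Option.some_inj.1 h2).symm
        refine ⟨by simp [hlen], by rw [headD_concat hne]; exact hhead,
          isAscentSeq_append hasc hne (by omega), ?_,
          avoid021_concat hv1 (Or.inr le_rfl), ?_, h7, h8⟩
        · rw [ascN_append u hne, maxL_append, if_neg (by omega)]
          omega
        · have hm' : maxL (v ++ [maxL u]) = maxL u := by rw [← hv]
          have := avoid0101_concat_rep (hv ▸ hv2) hm'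
          rw [hv, hm']
          exact this

lemma ContainsPat.sublist_mono {u w τ : List ℕ} (h : ContainsPat u τ) (hs : u.Sublist w) :
    ContainsPat w τ := by
  obtain ⟨s, h1, h2, h3⟩ := h
  exact ⟨s, h1.trans hs, h2, h3⟩

lemma bset_subset (n : ℕ) : ∀ w ∈ BSet (n+1) [0,1,0,1], w ∈ Sfin n := by
  induction n with
  | zero =>
    rintro w ⟨hlen, hasc, -, -⟩
    obtain ⟨a, t, rfl⟩ := List.exists_cons_of_ne_nil ((List.length_pos_iff (l := w)).1 (by omega))
    have ht : t = [] := by simpa using hlen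
    have ha : a = 0 := by simpa using hasc.1 (by simp)
    subst ht; subst ha
    simp [Sfin, AB]
  | succ n ih =>
    rintro w ⟨hlen, hasc, hv1, hv2⟩
    have hwne : w ≠ [] := by intro h; rw [h] at hlen; simp at hlen
    obtain ⟨u, c, rfl⟩ : ∃ u c, w = u ++ [c] :=
      ⟨w.dropLast, w.getLast hwne, (List.dropLast_append_getLast hwne).symm⟩
    have hulen : u.length = n + 1 := by simp at hlen; omega
    have hne : u ≠ [] := by intro h'; rw [h'] at hulen; simp at hulen
    obtain ⟨huasc, hcb⟩ := isAscentSeq_of_append hasc hne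
    have huS : u ∈ Sfin n := by
      refine ih u ⟨hulen, huasc, ?_, ?_⟩
      · exact fun hc => hv1 (hc.sublist_mono (List.prefix_append u [c]).sublist)
      · exact fun hc => hv2 (hc.sublist_mono (List.prefix_append u [c]).sublist)
    obtain ⟨-, hhead, -, hax, -, -, hA, hB⟩ := inv n u huS
    have hcb' : c ≤ maxL u + 1 := by omega
    -- decompose u as 0 :: t
    obtain ⟨a, t, rfl⟩ := List.exists_cons_of_ne_nil hne
    have ha : a = 0 := by simpa using hhead
    subst ha
    set u := (0 : ℕ) :: t with hudef
    by_cases hc0 : c = 0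
    · subst hc0
      refine Finset.mem_union_left _ ?_
      simp only [AB, Finset.mem_image]
      exact ⟨u, huS, rfl⟩
    · by_cases hc2 : c = maxL u + 1
      · subst hc2
        refine Finset.mem_union_right _ (Finset.mem_union.2 (Or.inl ?_))
        exact Finset.mem_image.2 ⟨u, huS, rfl⟩
      · have hclt : c ≤ maxL u := by omega
        by_cases hcm : c = maxL u
        · rcases Finset.mem_union.1 huS with hA' | hB'
          · exfalso
            obtain ⟨v, hv⟩ := hA hA'
            have hmem : c ∈ u := hcm ▸ maxL_mem (by omega)
            have hvne : v ≠ [] := by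
              intro h'; rw [h'] at hv; rw [hv] at hmem; simp at hmem; omega
            obtain ⟨b, t', rfl⟩ := List.exists_cons_of_ne_nil hvne
            have hb : b = 0 := by
              have : u.headD 0 = b := by rw [hv]; rfl
              rw [hhead] at this; omega
            subst hb
            have hmem' : c ∈ t' := by
              rw [hv] at hmem
              simp at hmem
              rcases hmem with h' | h' | h' <;> first | exact h' | omega
            have s1 : [0, c].Sublist (0 :: t') := (List.singleton_sublist.2 hmem').cons₂ 0
            have s2 : [0, c, 0].Sublist u := by
              rw [hv]
              exact List.Sublist.append s1 (List.Sublist.refl [0])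
            have s3 : [0, c, 0, c].Sublist (u ++ [c]) :=
              List.Sublist.append s2 (List.Sublist.refl [c])
            exact hv2 ((contains0101_iff _).2 ⟨0, c, s3, by omega⟩)
          · refine Finset.mem_union_right _ (Finset.mem_union.2 (Or.inr ?_))
            exact Finset.mem_image.2 ⟨u, hB', by rw [hcm]⟩
        · exfalso
          have hlt : c < maxL u := lt_of_le_of_ne hclt hcm
          have hmem : maxL u ∈ u := maxL_mem (by omega)
          have hmem' : maxL u ∈ t := by
            rcases List.mem_cons.1 hmem with h' | h'
            · omega
            · exact h'
          have s1 : [0, maxL u].Sublist u := (List.singleton_sublist.2 hmem').cons₂ 0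
          have s3 : [0, maxL u, c].Sublist (u ++ [c]) :=
            List.Sublist.append s1 (List.Sublist.refl [c])
          exact hv1 ((contains021_iff _).2 ⟨0, maxL u, c, s3, by omega, hlt⟩)

lemma bset_eq (n : ℕ) : BSet (n+1) [0,1,0,1] = ↑(Sfin n) := by
  ext w
  constructor
  · exact bset_subset n w
  · intro hw
    obtain ⟨h1, _, h3, _, h5, h6, _, _⟩ := inv n w hw
    exact ⟨h1, h3, h5, h6⟩

lemma card_fib (n : ℕ) :
    ((AB n).2).card = Nat.fib (2*n) ∧ (Sfin n).card = Nat.fib (2*n+1) := by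
  induction n with
  | zero => constructor <;> simp [Sfin, AB]
  | succ n ih =>
    obtain ⟨ihB, ihS⟩ := ih
    have inj0 : Function.Injective (fun u : List ℕ => u ++ [0]) := by
      intro u v h; simpa [List.dropLast_concat] using congrArg List.dropLast h
    have inj1 : Function.Injective (fun u : List ℕ => u ++ [maxL u + 1]) := by
      intro u v h; simpa [List.dropLast_concat] using congrArg List.dropLast h
    have inj2 : Function.Injective (fun u : List ℕ => u ++ [maxL u]) := by
      intro u v h; simpa [List.dropLast_concat] using congrArg List.dropLast h
    have hA : ((AB (n+1)).1).card = Nat.fib (2*n+1) := by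
      rw [show (AB (n+1)).1 = (Sfin n).image (fun u => u ++ [0]) from rfl,
        Finset.card_image_of_injective _ inj0, ihS]
    have hdisj : Disjoint ((Sfin n).image (fun u => u ++ [maxL u + 1]))
        ((AB n).2.image (fun u => u ++ [maxL u])) := by
      rw [Finset.disjoint_left]
      rintro w hw1 hw2
      obtain ⟨u, -, rfl⟩ := Finset.mem_image.1 hw1
      obtain ⟨v, -, hv⟩ := Finset.mem_image.1 hw2
      have huv : v = u := by simpa [List.dropLast_concat] using congrArg List.dropLast hv
      subst huv
      have h2 := congrArg List.getLast? hv
      simp [List.getLast?_concat] at h2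
    have hB : ((AB (n+1)).2).card = Nat.fib (2*(n+1)) := by
      rw [show (AB (n+1)).2 = (Sfin n).image (fun u => u ++ [maxL u + 1]) ∪
          (AB n).2.image (fun u => u ++ [maxL u]) from rfl,
        Finset.card_union_of_disjoint hdisj, Finset.card_image_of_injective _ inj1,
        Finset.card_image_of_injective _ inj2, ihS, ihB,
        show 2*(n+1) = (2*n) + 2 by ring, Nat.fib_add_two]
      omega
    refine ⟨hB, ?_⟩
    have hdisj2 : Disjoint (AB (n+1)).1 (AB (n+1)).2 := by
      rw [Finset.disjoint_left]
      intro w hw1 hw2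
      obtain ⟨-, -, -, -, -, -, h7, h8⟩ := inv (n+1) w (Finset.mem_union_left _ hw1)
      obtain ⟨u, rfl⟩ := h7 hw1
      obtain ⟨v, hv, hm⟩ := h8 hw2
      have h2 := congrArg List.getLast? hv
      simp only [List.getLast?_concat, Option.some_inj] at h2
      omega
    rw [Sfin, Finset.card_union_of_disjoint hdisj2, hA, hB,
      show 2*(n+1)+1 = (2*n+1) + 2 by ring, Nat.fib_add_two,
      show 2*(n+1) = (2*n+1) + 1 by ring]

end ABdef

/-- Ascent sequences of length `n ≥ 1` avoiding 021 and 0101 are counted by `F_{2n-1}`. -/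
theorem card_avoid021_0101 (n : ℕ) (hn : 1 ≤ n) :
    (BSet n [0,1,0,1]).ncard = Nat.fib (2*n - 1) := by
  obtain ⟨m, rfl⟩ : ∃ m, n = m + 1 := ⟨n - 1, by omega⟩
  rw [bset_eq m, Set.ncard_coe_finset, show 2*(m+1)-1 = 2*m+1 by omega, (card_fib m).2]
end

section
/- For every n ≥ 0, the sets of ascent sequences of length n avoiding {021, 0010} and avoiding {021, 0110} have equal cardinality. -/
open PowerSeries

namespace CardAux

/- ## basic ascN lemmas -/
lemma ascN_nil : ascN [] = 0 := rfl
lemma ascN_single (a : ℕ) : ascN [a] = 0 := rfl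
lemma ascN_cons_cons (a b : ℕ) (l : List ℕ) :
    ascN (a::b::l) = (if a < b then 1 else 0) + ascN (b::l) := by
  simp only [ascN, List.tail, List.zip_cons_cons, List.filter, List.zip]
  split <;> simp_all [Nat.add_comm]

lemma ascN_append_last (p : List ℕ) (v x : ℕ) (h : p.getLast? = some v) :
    ascN (p ++ [x]) = ascN p + (if v < x then 1 else 0) := by
  induction p generalizing v with
  | nil => simp at h
  | cons a p ih =>
    cases p with
    | nil =>
      simp only [List.getLast?_singleton, Option.some.injEq] at h
      subst h
      simp [ascN_cons_cons, ascN_single, ascN_nil, Nat.add_comm]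
    | cons b q =>
      have h' : (b::q).getLast? = some v := by rwa [List.getLast?_cons_cons] at h
      have h2 := ih v h'
      simp only [List.cons_append] at h2 ⊢
      rw [ascN_cons_cons, ascN_cons_cons, h2]
      ring

/- ## the Asc predicate -/
def Asc : ℕ → ℕ → List ℕ → Prop
  | _, _, [] => True
  | prev, a, x :: s => x ≤ a + 1 ∧ Asc x (if prev < x then a + 1 else a) s

lemma asc_iff_forall (r : List ℕ) : ∀ (p : List ℕ) (v a : ℕ), p ≠ [] → p.getLast? = some v →
    ascN p = a →
    (Asc v a r ↔ ∀ i, p.length ≤ i → i < (p ++ r).length →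
        (p ++ r).getD i 0 ≤ ascN ((p ++ r).take i) + 1) := by
  induction r with
  | nil =>
    intro p v a hp hl ha
    simp only [List.append_nil, Asc, true_iff]
    intro i h1 h2; omega
  | cons x s ih =>
    intro p v a hp hl ha
    have hgd : (p ++ x :: s).getD p.length 0 = x := by
      rw [List.getD_append_right _ _ _ _ (le_refl _)]
      simp
    have htk : (p ++ x :: s).take p.length = p := List.take_left (l₁ := p) (l₂ := x :: s)
    have hassoc : p ++ x :: s = (p ++ [x]) ++ s := by simp
    have hlast : (p ++ [x]).getLast? = some x := by
      rw [List.getLast?_append]; rfl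
    have hasc : ascN (p ++ [x]) = a + (if v < x then 1 else 0) := by
      rw [ascN_append_last p v x hl, ha]
    have ih' := ih (p ++ [x]) x (if v < x then a + 1 else a) (by simp)
      hlast (by rw [hasc]; split <;> omega)
    constructor
    · intro hA i h1 h2
      rcases Nat.eq_or_lt_of_le h1 with rfl | h1
      · rw [hgd, htk, ha]
        exact hA.1
      · rw [hassoc]
        refine (ih'.mp hA.2) i (by simp only [List.length_append, List.length_singleton, List.length_cons, List.length_nil]; omega)
          (by simp only [List.length_append, List.length_singleton, List.length_cons, List.length_nil] at h2 ⊢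
              omega)
    · intro h
      constructor
      · have := h p.length (le_refl _) (by simp)
        rwa [hgd, htk, ha] at this
      · refine ih'.mpr ?_
        intro i h1 h2
        have := h i
          (by simp only [List.length_append, List.length_singleton, List.length_cons, List.length_nil] at h1; omega)
          (by simp only [List.length_append, List.length_singleton, List.length_cons, List.length_nil] at h2 ⊢
              omega)
        rwa [hassoc] at this

lemma isAscentSeq_iff (r : List ℕ) : IsAscentSeq (0 :: r) ↔ Asc 0 0 r := by
  rw [asc_iff_forall r [0] 0 0 (by simp) rfl rfl]
  simp only [List.singleton_append, List.length_singleton]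
  constructor
  · intro h i h1 h2; exact h.2 i h1 h2
  · intro h; exact ⟨fun _ => rfl, fun i h1 h2 => h i h1 h2⟩

lemma last_le_of_isAscentSeq (w : List ℕ) (x : ℕ) (h : IsAscentSeq (w ++ [x])) (hw : w ≠ []) :
    x ≤ ascN w + 1 := by
  have h2 := h.2 w.length (List.length_pos_iff.mpr hw) (by simp)
  rw [List.getD_append_right _ _ _ _ (le_refl _), List.take_left] at h2
  simpa using h2

lemma asc_zero_cons (v a : ℕ) (r : List ℕ) : Asc v a (0 :: r) ↔ Asc 0 a r := by
  simp [Asc]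

lemma asc_congr_prev (p q a : ℕ) (r : List ℕ) (h : ∀ x, (p < x ↔ q < x)) :
    Asc p a r ↔ Asc q a r := by
  cases r with
  | nil => rfl
  | cons x s => simp [Asc, h x]

lemma asc_replicate_zero (k : ℕ) (v a : ℕ) (r : List ℕ) :
    Asc v a (List.replicate k 0 ++ r) ↔ Asc (if k = 0 then v else 0) a r := by
  induction k generalizing v with
  | zero => simp
  | succ k ih =>
    rw [List.replicate_succ, List.cons_append, asc_zero_cons, ih 0]
    split <;> simp

lemma asc_replicate_self (j v a : ℕ) (r : List ℕ) (h : v ≤ a + 1) :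
    Asc v a (List.replicate j v ++ r) ↔ Asc v a r := by
  induction j with
  | zero => simp
  | succ j ih =>
    rw [List.replicate_succ, List.cons_append]
    simp only [Asc, lt_irrefl, if_neg (lt_irrefl v), h, true_and]
    exact ih

/- ## stair and inter words -/
def stairF : ℕ → List ℕ → List ℕ
  | _, [] => []
  | v, c :: cs => List.replicate c v ++ stairF (v+1) cs

def interF : ℕ → List ℕ → List ℕ
  | _, [] => []
  | v, c :: cs => List.replicate (c-1) 0 ++ v :: interF (v+1) cs

def tOK (m : ℕ) (t : List ℕ) : Prop :=
  (∀ x ∈ t, 0 < x ∧ m ≤ x) ∧ t.Pairwise (· ≤ ·) ∧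
    ∀ i < t.length, t.getD i 0 ≤ m + ascN (0 :: t.take i) + 1

def wA (p : List ℕ × ℕ × List ℕ) : List ℕ :=
  0 :: (stairF 1 p.1 ++ (List.replicate p.2.1 0 ++ p.2.2))

def wB (p : List ℕ × ℕ × List ℕ) : List ℕ :=
  0 :: (interF 1 p.1 ++ (List.replicate p.2.1 0 ++ p.2.2))

def PA (n : ℕ) : Set (List ℕ × ℕ × List ℕ) :=
  {p | (∀ x ∈ p.1, 1 ≤ x) ∧ (p.1 = [] ∨ 1 ≤ p.2.1) ∧ tOK p.1.length p.2.2 ∧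
    1 + p.1.sum + p.2.1 + p.2.2.length = n}

lemma stairF_length (v : ℕ) (c : List ℕ) : (stairF v c).length = c.sum := by
  induction c generalizing v with
  | nil => rfl
  | cons c0 cs ih => simp [stairF, ih]

lemma interF_length (v : ℕ) (c : List ℕ) (hc : ∀ x ∈ c, 1 ≤ x) :
    (interF v c).length = c.sum := by
  induction c generalizing v with
  | nil => rfl
  | cons c0 cs ih =>
    have h0 : 1 ≤ c0 := hc c0 (by simp)
    have := ih (v+1) (fun x hx => hc x (by simp [hx]))
    simp [interF, this]
    omega

lemma stairF_mem (v : ℕ) (c : List ℕ) : ∀ x ∈ stairF v c, v ≤ x ∧ x < v + c.length := by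
  induction c generalizing v with
  | nil => simp [stairF]
  | cons c0 cs ih =>
    intro x hx
    simp only [stairF, List.mem_append, List.mem_replicate] at hx
    rcases hx with ⟨_, rfl⟩ | hx
    · simp
    · have := ih (v+1) x hx
      simp only [List.length_cons]
      omega

lemma interF_mem (v : ℕ) (c : List ℕ) : ∀ x ∈ interF v c, x = 0 ∨ (v ≤ x ∧ x < v + c.length) := by
  induction c generalizing v with
  | nil => simp [interF]
  | cons c0 cs ih =>
    intro x hx
    simp only [interF, List.mem_append, List.mem_replicate, List.mem_cons] at hx
    rcases hx with ⟨_, rfl⟩ | rfl | hx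
    · left; rfl
    · right; simp
    · rcases ih (v+1) x hx with h | h
      · left; exact h
      · right; simp only [List.length_cons]; omega

lemma stairF_sorted (v : ℕ) (c : List ℕ) : (stairF v c).Pairwise (· ≤ ·) := by
  induction c generalizing v with
  | nil => simp [stairF]
  | cons c0 cs ih =>
    unfold stairF
    rw [List.pairwise_append]
    refine ⟨by simp [List.pairwise_replicate], ih (v+1), ?_⟩
    intro a ha b hb
    rw [List.eq_of_mem_replicate ha]
    have := stairF_mem (v+1) cs b hb
    omega

lemma interF_pairwise (v : ℕ) (c : List ℕ) :
    (interF v c).Pairwise (fun x y => 0 < y → x ≤ y) := by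
  induction c generalizing v with
  | nil => simp [interF]
  | cons c0 cs ih =>
    unfold interF
    rw [List.pairwise_append]
    refine ⟨by simp [List.pairwise_replicate], ?_, ?_⟩
    · rw [List.pairwise_cons]
      refine ⟨?_, ih (v+1)⟩
      intro y hy _
      rcases interF_mem (v+1) cs y hy with rfl | h
      · omega
      · omega
    · intro a ha b hb _
      rw [List.eq_of_mem_replicate ha]
      omega

lemma interF_pairwise_lt (v : ℕ) (c : List ℕ) :
    (interF v c).Pairwise (fun x y => 0 < x → 0 < y → x < y) := by
  induction c generalizing v with
  | nil => simp [interF]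
  | cons c0 cs ih =>
    unfold interF
    rw [List.pairwise_append]
    refine ⟨by simp [List.pairwise_replicate], ?_, ?_⟩
    · rw [List.pairwise_cons]
      refine ⟨?_, ih (v+1)⟩
      intro y hy _ hy2
      rcases interF_mem (v+1) cs y hy with rfl | h
      · omega
      · omega
    · intro a ha b hb ha2 _
      rw [List.eq_of_mem_replicate ha] at ha2
      omega

lemma stairF_last_mem (v : ℕ) (c : List ℕ) (hne : c ≠ []) (hc : ∀ x ∈ c, 1 ≤ x) :
    v + c.length - 1 ∈ stairF v c := by
  induction c generalizing v with
  | nil => simp at hne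
  | cons c0 cs ih =>
    unfold stairF
    rcases List.eq_nil_or_concat cs with rfl | hcs
    · have h0 : 1 ≤ c0 := hc c0 (by simp)
      simp only [List.length_cons, List.length_nil]
      rw [List.mem_append]
      left
      rw [List.mem_replicate]
      constructor
      · omega
      · omega
    · have hne2 : cs ≠ [] := by rcases hcs with ⟨a, b, rfl⟩; simp
      have := ih (v+1) hne2 (fun x hx => hc x (by simp [hx]))
      rw [List.mem_append]
      right
      simp only [List.length_cons]
      have hl : 1 ≤ cs.length := List.length_pos_iff.mpr hne2
      have : v + 1 + cs.length - 1 = v + (cs.length + 1) - 1 := by omega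
      rw [← this]
      exact ih (v+1) hne2 (fun x hx => hc x (by simp [hx]))

lemma interF_last_mem (v : ℕ) (c : List ℕ) (hne : c ≠ []) :
    v + c.length - 1 ∈ interF v c := by
  induction c generalizing v with
  | nil => simp at hne
  | cons c0 cs ih =>
    unfold interF
    rcases List.eq_nil_or_concat cs with rfl | hcs
    · simp
    · have hne2 : cs ≠ [] := by rcases hcs with ⟨a, b, rfl⟩; simp
      rw [List.mem_append, List.mem_cons]
      right; right
      simp only [List.length_cons]
      have hl : 1 ≤ cs.length := List.length_pos_iff.mpr hne2
      have heq : v + (cs.length + 1) - 1 = v + 1 + cs.length - 1 := by omega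
      rw [heq]
      exact ih (v+1) hne2

lemma interF_append (v : ℕ) (c d : List ℕ) :
    interF v (c ++ d) = interF v c ++ interF (v + c.length) d := by
  induction c generalizing v with
  | nil => simp [interF]
  | cons c0 cs ih =>
    show List.replicate (c0-1) 0 ++ v :: interF (v+1) (cs ++ d) =
      (List.replicate (c0-1) 0 ++ v :: interF (v+1) cs) ++ interF (v + (c0::cs).length) d
    rw [ih (v+1)]
    simp only [List.length_cons, List.append_assoc, List.cons_append]
    have : v + 1 + cs.length = v + (cs.length + 1) := by omega
    rw [this]

lemma interF_eq_stairF_replicate_one (r : ℕ) : ∀ v : ℕ,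
    interF v (List.replicate r 1) = stairF v (List.replicate r 1) := by
  induction r with
  | zero => intro v; rfl
  | succ r ih =>
    intro v
    rw [List.replicate_succ]
    show List.replicate (1-1) 0 ++ v :: interF (v+1) (List.replicate r 1) =
      List.replicate 1 v ++ stairF (v+1) (List.replicate r 1)
    rw [ih (v+1)]
    rfl

/- ## extra ascN lemmas -/
lemma ascN_le_length (x : ℕ) (l : List ℕ) : ascN (x :: l) ≤ l.length := by
  unfold ascN
  refine (List.length_filter_le _ _).trans ?_
  simp [List.length_zip]

lemma getD_take_eq (l : List ℕ) (n i : ℕ) (h : i < n) : (l.take n).getD i 0 = l.getD i 0 := by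
  simp [List.getD_eq_getElem?_getD, List.getElem?_take, h]

lemma length_eq_four {α : Type*} {l : List α} (h : l.length = 4) :
    ∃ a b c d, l = [a, b, c, d] := by
  rcases l with _ | ⟨a, l⟩; · simp at h
  rcases l with _ | ⟨b, l⟩; · simp at h
  rcases l with _ | ⟨c, l⟩; · simp at h
  rcases l with _ | ⟨d, l⟩; · simp at h
  rcases l with _ | ⟨e, l⟩
  · exact ⟨a, b, c, d, rfl⟩
  · simp at h

/- ## pattern lemmas -/
lemma containsPat_021 (w : List ℕ) :
    ContainsPat w [0,2,1] ↔ ∃ a b c : ℕ, [a,b,c].Sublist w ∧ a < c ∧ c < b := by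
  constructor
  · rintro ⟨s, hsub, hlen, hcond⟩
    obtain ⟨a, b, c, rfl⟩ := List.length_eq_three.mp (by simpa using hlen)
    have h1 := (hcond 0 2 (by norm_num) (by norm_num)).1
    have h2 := (hcond 2 1 (by norm_num) (by norm_num)).1
    simp [List.getD] at h1 h2
    exact ⟨a, b, c, hsub, h1, by omega⟩
  · rintro ⟨a, b, c, hsub, h1, h2⟩
    refine ⟨[a,b,c], hsub, rfl, ?_⟩
    intro j k hj hk
    simp only [List.length_cons, List.length_nil] at hj hk
    interval_cases j <;> interval_cases k <;> simp [List.getD] <;> omega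

lemma containsPat_0010 (w : List ℕ) :
    ContainsPat w [0,0,1,0] ↔ ∃ a b : ℕ, [a,a,b,a].Sublist w ∧ a < b := by
  constructor
  · rintro ⟨s, hsub, hlen, hcond⟩
    obtain ⟨a, b, c, d, rfl⟩ := length_eq_four (by simpa using hlen)
    have h1 := (hcond 0 1 (by norm_num) (by norm_num)).2
    have h2 := (hcond 0 3 (by norm_num) (by norm_num)).2
    have h3 := (hcond 0 2 (by norm_num) (by norm_num)).1
    simp [List.getD] at h1 h2 h3
    subst h1; subst h2
    exact ⟨a, c, hsub, h3⟩
  · rintro ⟨a, b, hsub, h1⟩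
    refine ⟨[a,a,b,a], hsub, rfl, ?_⟩
    intro j k hj hk
    simp only [List.length_cons, List.length_nil] at hj hk
    interval_cases j <;> interval_cases k <;> simp [List.getD] <;> omega

lemma containsPat_0110 (w : List ℕ) :
    ContainsPat w [0,1,1,0] ↔ ∃ a b : ℕ, [a,b,b,a].Sublist w ∧ a < b := by
  constructor
  · rintro ⟨s, hsub, hlen, hcond⟩
    obtain ⟨a, b, c, d, rfl⟩ := length_eq_four (by simpa using hlen)
    have h1 := (hcond 1 2 (by norm_num) (by norm_num)).2
    have h2 := (hcond 0 3 (by norm_num) (by norm_num)).2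
    have h3 := (hcond 0 1 (by norm_num) (by norm_num)).1
    simp [List.getD] at h1 h2 h3
    subst h1; subst h2
    exact ⟨a, b, hsub, h3⟩
  · rintro ⟨a, b, hsub, h1⟩
    refine ⟨[a,b,b,a], hsub, rfl, ?_⟩
    intro j k hj hk
    simp only [List.length_cons, List.length_nil] at hj hk
    interval_cases j <;> interval_cases k <;> simp [List.getD] <;> omega

lemma avoid021_of_pairwise (w : List ℕ) (h : w.Pairwise (fun x y => 0 < y → x ≤ y)) :
    AvoidsPat w [0,2,1] := by
  intro hcon
  obtain ⟨a, b, c, hsub, h1, h2⟩ := (containsPat_021 w).mp hcon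
  have hbc : [b, c].Sublist w := (List.sublist_cons_self a [b,c]).trans hsub
  have := List.pairwise_iff_forall_sublist.mp h hbc (by omega)
  omega

lemma containsPat_mono (w w' τ : List ℕ) (h : w'.Sublist w) :
    ContainsPat w' τ → ContainsPat w τ := by
  rintro ⟨s, hsub, hlen, hcond⟩
  exact ⟨s, hsub.trans h, hlen, hcond⟩

/- ## asc for the normal forms -/
lemma asc_of_bounds (t : List ℕ) : ∀ (prev a : ℕ),
    (∀ i < t.length, t.getD i 0 ≤ a + ascN (prev :: t.take i) + 1) → Asc prev a t := by
  induction t with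
  | nil => intro _ _ _; trivial
  | cons x s ih =>
    intro prev a h
    refine ⟨by simpa [ascN_single] using h 0 (by simp), ?_⟩
    apply ih
    intro i hi
    have h2 := h (i+1) (by simpa using hi)
    rw [List.getD_cons_succ, List.take_succ_cons, ascN_cons_cons] at h2
    by_cases hpx : prev < x
    · rw [if_pos hpx] at h2 ⊢; omega
    · rw [if_neg hpx] at h2 ⊢; omega

lemma tOK_asc (m : ℕ) (t : List ℕ) (h : tOK m t) : Asc 0 m t := by
  apply asc_of_bounds
  intro i hi
  have := h.2.2 i hi
  omega

lemma stair_through (c : List ℕ) : ∀ (v a prev : ℕ) (r : List ℕ), (∀ x ∈ c, 1 ≤ x) →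
    prev < v → v = a + 1 →
    (Asc prev a (stairF v c ++ 0 :: r) ↔ Asc 0 (a + c.length) r) := by
  induction c with
  | nil => intro v a prev r _ hp hv; simp [stairF, asc_zero_cons]
  | cons c0 cs ih =>
    intro v a prev r hc hp hv
    obtain ⟨c0', rfl⟩ : ∃ d, c0 = d + 1 := ⟨c0 - 1, by have := hc c0 (by simp); omega⟩
    show Asc prev a ((List.replicate (c0'+1) v ++ stairF (v+1) cs) ++ 0 :: r) ↔ _
    rw [List.replicate_succ, List.cons_append, List.cons_append]
    simp only [Asc]
    rw [if_pos hp, List.append_assoc]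
    rw [asc_replicate_self c0' v (a+1) _ (by omega)]
    rw [ih (v+1) (a+1) v r (fun x hx => hc x (by simp [hx])) (by omega) (by omega)]
    have hv1 : v ≤ a + 1 := by omega
    simp only [hv1, true_and, List.length_cons]
    have : a + 1 + cs.length = a + (cs.length + 1) := by omega
    rw [this]

lemma inter_through (c : List ℕ) : ∀ (v a prev : ℕ) (r : List ℕ), (∀ x ∈ c, 1 ≤ x) →
    prev < v → v = a + 1 →
    (Asc prev a (interF v c ++ 0 :: r) ↔ Asc 0 (a + c.length) r) := by
  induction c with
  | nil => intro v a prev r _ hp hv; simp [interF, asc_zero_cons]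
  | cons c0 cs ih =>
    intro v a prev r hc hp hv
    show Asc prev a ((List.replicate (c0-1) 0 ++ v :: interF (v+1) cs) ++ 0 :: r) ↔ _
    rw [List.append_assoc, asc_replicate_zero, List.cons_append]
    simp only [Asc]
    have hq : (if c0 - 1 = 0 then prev else 0) < v := by split <;> omega
    rw [if_pos hq]
    rw [ih (v+1) (a+1) v r (fun x hx => hc x (by simp [hx])) (by omega) (by omega)]
    have hv1 : v ≤ a + 1 := by omega
    simp only [hv1, true_and, List.length_cons]
    have : a + 1 + cs.length = a + (cs.length + 1) := by omega
    rw [this]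

/- ## ascN for the normal forms -/
lemma ascN_repl_self (j v : ℕ) (X : List ℕ) :
    ascN (v :: (List.replicate j v ++ X)) = ascN (v :: X) := by
  induction j with
  | zero => rfl
  | succ j ih =>
    rw [List.replicate_succ, List.cons_append, ascN_cons_cons, if_neg (lt_irrefl v), ih]
    omega

lemma ascN_repl_zero (j : ℕ) (p : ℕ) (X : List ℕ) :
    ascN (p :: (List.replicate j 0 ++ X)) = if j = 0 then ascN (p :: X) else ascN (0 :: X) := by
  induction j generalizing p with
  | zero => simp
  | succ j ih =>
    rw [List.replicate_succ, List.cons_append, ascN_cons_cons, if_neg (by omega), ih 0]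
    split <;> simp

lemma ascN_stair (c : List ℕ) : ∀ (v p : ℕ) (r : List ℕ), (∀ x ∈ c, 1 ≤ x) → p < v →
    ascN (p :: (stairF v c ++ 0 :: r)) = c.length + ascN (0 :: r) := by
  induction c with
  | nil =>
    intro v p r _ hp
    show ascN (p :: 0 :: r) = _
    rw [ascN_cons_cons, if_neg (by omega)]
    simp
  | cons c0 cs ih =>
    intro v p r hc hp
    obtain ⟨c0', rfl⟩ : ∃ d, c0 = d + 1 := ⟨c0 - 1, by have := hc c0 (by simp); omega⟩
    show ascN (p :: ((List.replicate (c0'+1) v ++ stairF (v+1) cs) ++ 0 :: r)) = _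
    rw [List.replicate_succ, List.cons_append, List.cons_append, ascN_cons_cons, if_pos hp,
      List.append_assoc, ascN_repl_self, ih (v+1) v r (fun x hx => hc x (by simp [hx])) (by omega)]
    simp only [List.length_cons]
    omega

lemma ascN_inter (c : List ℕ) : ∀ (v p : ℕ) (r : List ℕ), (∀ x ∈ c, 1 ≤ x) → p < v →
    ascN (p :: (interF v c ++ 0 :: r)) = c.length + ascN (0 :: r) := by
  induction c with
  | nil =>
    intro v p r _ hp
    show ascN (p :: 0 :: r) = _
    rw [ascN_cons_cons, if_neg (by omega)]
    simp
  | cons c0 cs ih =>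
    intro v p r hc hp
    show ascN (p :: ((List.replicate (c0-1) 0 ++ v :: interF (v+1) cs) ++ 0 :: r)) = _
    rw [List.append_assoc, ascN_repl_zero, List.cons_append]
    have key : ∀ q : ℕ, q < v →
        ascN (q :: v :: (interF (v+1) cs ++ 0 :: r)) = (c0 :: cs).length + ascN (0 :: r) := by
      intro q hq
      rw [ascN_cons_cons, if_pos hq, ih (v+1) v r (fun x hx => hc x (by simp [hx])) (by omega)]
      simp only [List.length_cons]
      omega
    split
    · exact key p hp
    · exact key 0 (by omega)

lemma ascN_wA (p : List ℕ × ℕ × List ℕ) (hc : ∀ x ∈ p.1, 1 ≤ x) (hk : p.1 = [] ∨ 1 ≤ p.2.1) :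
    ascN (wA p) = p.1.length + ascN (0 :: p.2.2) := by
  obtain ⟨c, k, t⟩ := p
  rcases hk with rfl | hk
  · show ascN (0 :: ([] ++ (List.replicate k 0 ++ t))) = _
    rw [List.nil_append, ascN_repl_zero]
    split <;> simp
  · have hk' : 1 ≤ k := hk
    obtain ⟨k', rfl⟩ : ∃ d, k = d + 1 := ⟨k - 1, by omega⟩
    show ascN (0 :: (stairF 1 c ++ (List.replicate (k'+1) 0 ++ t))) = _
    rw [List.replicate_succ, List.cons_append, ascN_stair c 1 0 _ hc (by omega), ascN_repl_zero]
    split <;> simp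

lemma ascN_wB (p : List ℕ × ℕ × List ℕ) (hc : ∀ x ∈ p.1, 1 ≤ x) (hk : p.1 = [] ∨ 1 ≤ p.2.1) :
    ascN (wB p) = p.1.length + ascN (0 :: p.2.2) := by
  obtain ⟨c, k, t⟩ := p
  rcases hk with rfl | hk
  · show ascN (0 :: ([] ++ (List.replicate k 0 ++ t))) = _
    rw [List.nil_append, ascN_repl_zero]
    split <;> simp
  · have hk' : 1 ≤ k := hk
    obtain ⟨k', rfl⟩ : ∃ d, k = d + 1 := ⟨k - 1, by omega⟩
    show ascN (0 :: (interF 1 c ++ (List.replicate (k'+1) 0 ++ t))) = _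
    rw [List.replicate_succ, List.cons_append, ascN_inter c 1 0 _ hc (by omega), ascN_repl_zero]
    split <;> simp

/- ## splitting lemmas for injectivity -/
lemma run_split (u : ℕ) : ∀ (j1 j2 : ℕ) (y1 y2 : List ℕ),
    (y1 = [] ∨ y1.head? ≠ some u) → (y2 = [] ∨ y2.head? ≠ some u) →
    List.replicate j1 u ++ y1 = List.replicate j2 u ++ y2 → j1 = j2 ∧ y1 = y2 := by
  intro j1
  induction j1 with
  | zero =>
    intro j2 y1 y2 h1 h2 heq
    cases j2 with
    | zero => simpa using heq
    | succ j2 =>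
      rw [List.replicate_succ, List.cons_append] at heq
      simp only [List.replicate_zero, List.nil_append] at heq
      subst heq
      rcases h1 with h1 | h1
      · simp at h1
      · simp at h1
  | succ j1 ih =>
    intro j2 y1 y2 h1 h2 heq
    cases j2 with
    | zero =>
      rw [List.replicate_succ, List.cons_append] at heq
      simp only [List.replicate_zero, List.nil_append] at heq
      rcases h2 with h2 | h2
      · rw [← heq] at h2; simp at h2
      · rw [← heq] at h2; simp at h2
    | succ j2 =>
      rw [List.replicate_succ, List.replicate_succ, List.cons_append, List.cons_append] at heq
      have heq2 : List.replicate j1 u ++ y1 = List.replicate j2 u ++ y2 :=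
        (List.cons.inj heq).2
      have := ih j2 y1 y2 h1 h2 heq2
      exact ⟨by omega, this.2⟩

lemma first_zero_split : ∀ (S1 S2 r1 r2 : List ℕ), (∀ x ∈ S1, 0 < x) → (∀ x ∈ S2, 0 < x) →
    S1 ++ 0 :: r1 = S2 ++ 0 :: r2 → S1 = S2 ∧ r1 = r2 := by
  intro S1
  induction S1 with
  | nil =>
    intro S2 r1 r2 _ hS2 heq
    cases S2 with
    | nil => simpa using heq
    | cons s S2 =>
      simp only [List.nil_append, List.cons_append, List.cons.injEq] at heq
      have := hS2 s (by simp)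
      omega
  | cons s S1 ih =>
    intro S2 r1 r2 hS1 hS2 heq
    cases S2 with
    | nil =>
      simp only [List.nil_append, List.cons_append, List.cons.injEq] at heq
      have := hS1 s (by simp)
      omega
    | cons s2 S2 =>
      simp only [List.cons_append, List.cons.injEq] at heq
      obtain ⟨rfl, heq⟩ := heq
      have := ih S2 r1 r2 (fun x hx => hS1 x (by simp [hx])) (fun x hx => hS2 x (by simp [hx])) heq
      exact ⟨by rw [this.1], this.2⟩

lemma zero_run_split : ∀ (j1 j2 : ℕ) (t1 t2 : List ℕ), (∀ x ∈ t1, 0 < x) → (∀ x ∈ t2, 0 < x) →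
    List.replicate j1 0 ++ t1 = List.replicate j2 0 ++ t2 → j1 = j2 ∧ t1 = t2 := by
  intro j1 j2 t1 t2 h1 h2 heq
  apply run_split 0 j1 j2 t1 t2
  · cases t1 with
    | nil => left; rfl
    | cons x t => right; have := h1 x (by simp); simp; omega
  · cases t2 with
    | nil => left; rfl
    | cons x t => right; have := h2 x (by simp); simp; omega
  · exact heq

lemma head_ne_of_mem_ge (v : ℕ) (l : List ℕ) (hl : ∀ x ∈ l, v < x) :
    l = [] ∨ l.head? ≠ some v := by
  cases l with
  | nil => left; rfl
  | cons x t => right; have := hl x (by simp); simp; omega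

lemma stairF_inj (c1 : List ℕ) : ∀ (c2 : List ℕ) (v : ℕ), (∀ x ∈ c1, 1 ≤ x) → (∀ x ∈ c2, 1 ≤ x) →
    stairF v c1 = stairF v c2 → c1 = c2 := by
  induction c1 with
  | nil =>
    intro c2 v _ hc2 heq
    cases c2 with
    | nil => rfl
    | cons a as =>
      have h1 : 1 ≤ a := hc2 a (by simp)
      have := congrArg List.length heq
      rw [stairF_length, stairF_length] at this
      simp at this
      omega
  | cons a as ih =>
    intro c2 v hc1 hc2 heq
    cases c2 with
    | nil =>
      have h1 : 1 ≤ a := hc1 a (by simp)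
      have := congrArg List.length heq
      rw [stairF_length, stairF_length] at this
      simp at this
      omega
    | cons b bs =>
      have hsp := run_split v a b (stairF (v+1) as) (stairF (v+1) bs)
        (head_ne_of_mem_ge v _ (fun x hx => by have := stairF_mem (v+1) as x hx; omega))
        (head_ne_of_mem_ge v _ (fun x hx => by have := stairF_mem (v+1) bs x hx; omega)) heq
      have := ih bs (v+1) (fun x hx => hc1 x (by simp [hx])) (fun x hx => hc2 x (by simp [hx]))
        hsp.2
      rw [hsp.1, this]

lemma interF_inj (c1 : List ℕ) : ∀ (c2 : List ℕ) (v : ℕ), (∀ x ∈ c1, 1 ≤ x) → (∀ x ∈ c2, 1 ≤ x) →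
    1 ≤ v → interF v c1 = interF v c2 → c1 = c2 := by
  induction c1 with
  | nil =>
    intro c2 v _ hc2 hv heq
    cases c2 with
    | nil => rfl
    | cons a as =>
      have h1 : 1 ≤ a := hc2 a (by simp)
      have := congrArg List.length heq
      rw [interF_length _ _ (by simp), interF_length _ _ hc2] at this
      simp at this
      omega
  | cons a as ih =>
    intro c2 v hc1 hc2 hv heq
    cases c2 with
    | nil =>
      have h1 : 1 ≤ a := hc1 a (by simp)
      have := congrArg List.length heq
      rw [interF_length _ _ hc1, interF_length _ _ (by simp)] at this
      simp at this
      omega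
    | cons b bs =>
      have hsp := run_split 0 (a-1) (b-1) (v :: interF (v+1) as) (v :: interF (v+1) bs)
        (by right; simp; omega) (by right; simp; omega) heq
      have heq2 : interF (v+1) as = interF (v+1) bs := by
        have := hsp.2
        simpa using this
      have := ih bs (v+1) (fun x hx => hc1 x (by simp [hx])) (fun x hx => hc2 x (by simp [hx]))
        (by omega) heq2
      have ha : 1 ≤ a := hc1 a (by simp)
      have hb : 1 ≤ b := hc2 b (by simp)
      have hab : a = b := by have := hsp.1; omega
      rw [hab, this]

lemma injA (n : ℕ) : Set.InjOn wA (PA n) := by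
  rintro ⟨c1, k1, t1⟩ hp1 ⟨c2, k2, t2⟩ hp2 heq
  obtain ⟨hc1, hk1, ht1, -⟩ := hp1
  obtain ⟨hc2, hk2, ht2, -⟩ := hp2
  replace hc1 : ∀ x ∈ c1, 1 ≤ x := hc1
  replace hk1 : c1 = [] ∨ 1 ≤ k1 := hk1
  replace ht1 : tOK c1.length t1 := ht1
  replace hc2 : ∀ x ∈ c2, 1 ≤ x := hc2
  replace hk2 : c2 = [] ∨ 1 ≤ k2 := hk2
  replace ht2 : tOK c2.length t2 := ht2
  have hp1t : ∀ x ∈ t1, 0 < x := fun x hx => (ht1.1 x hx).1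
  have hp2t : ∀ x ∈ t2, 0 < x := fun x hx => (ht2.1 x hx).1
  have heq2 : (0:ℕ) :: (stairF 1 c1 ++ (List.replicate k1 0 ++ t1)) =
      0 :: (stairF 1 c2 ++ (List.replicate k2 0 ++ t2)) := heq
  have heq' := (List.cons.inj heq2).2
  rcases Nat.eq_zero_or_pos k1 with rfl | hk1p
  · have hc1n : c1 = [] := by
      rcases hk1 with h | h
      · exact h
      · omega
    subst hc1n
    have heq3 : t1 = stairF 1 c2 ++ (List.replicate k2 0 ++ t2) := by
      simpa [stairF] using heq'
    rcases Nat.eq_zero_or_pos k2 with rfl | hk2p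
    · have hc2n : c2 = [] := by
        rcases hk2 with h | h
        · exact h
        · omega
      subst hc2n
      simp [stairF, interF] at heq3
      rw [heq3]
    · exfalso
      obtain ⟨k2', rfl⟩ : ∃ d, k2 = d + 1 := ⟨k2 - 1, by omega⟩
      have h0 : (0:ℕ) ∈ t1 := by
        rw [heq3, List.mem_append, List.mem_append]
        right; left
        simp
      have := hp1t 0 h0
      omega
  · rcases Nat.eq_zero_or_pos k2 with rfl | hk2p
    · have hc2n : c2 = [] := by
        rcases hk2 with h | h
        · exact h
        · omega
      subst hc2n
      have heq3 : stairF 1 c1 ++ (List.replicate k1 0 ++ t1) = t2 := by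
        simpa [stairF] using heq'
      exfalso
      obtain ⟨k1', rfl⟩ : ∃ d, k1 = d + 1 := ⟨k1 - 1, by omega⟩
      have h0 : (0:ℕ) ∈ t2 := by
        rw [← heq3, List.mem_append, List.mem_append]
        right; left
        simp
      have := hp2t 0 h0
      omega
    · obtain ⟨k1', rfl⟩ : ∃ d, k1 = d + 1 := ⟨k1 - 1, by omega⟩
      obtain ⟨k2', rfl⟩ : ∃ d, k2 = d + 1 := ⟨k2 - 1, by omega⟩
      rw [List.replicate_succ, List.replicate_succ, List.cons_append, List.cons_append] at heq'
      have hfz := first_zero_split (stairF 1 c1) (stairF 1 c2) _ _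
        (fun x hx => (stairF_mem 1 c1 x hx).1) (fun x hx => (stairF_mem 1 c2 x hx).1) heq'
      have hcc : c1 = c2 := stairF_inj c1 c2 1 hc1 hc2 hfz.1
      have hzr := zero_run_split k1' k2' t1 t2 hp1t hp2t hfz.2
      rw [hcc, hzr.1, hzr.2]

lemma injB_aux (c1 : List ℕ) : ∀ (c2 : List ℕ) (v k1 k2 : ℕ) (t1 t2 : List ℕ),
    (∀ x ∈ c1, 1 ≤ x) → (∀ x ∈ c2, 1 ≤ x) → 1 ≤ v → 1 ≤ k1 → 1 ≤ k2 →
    (∀ x ∈ t1, 0 < x) → (∀ x ∈ t2, 0 < x) →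
    interF v c1 ++ (List.replicate k1 0 ++ t1) = interF v c2 ++ (List.replicate k2 0 ++ t2) →
    c1 = c2 ∧ k1 = k2 ∧ t1 = t2 := by
  induction c1 with
  | nil =>
    intro c2 v k1 k2 t1 t2 hc1 hc2 hv hk1 hk2 h1 h2 heq
    cases c2 with
    | nil =>
      have := zero_run_split k1 k2 t1 t2 h1 h2 (by simpa using heq)
      exact ⟨rfl, this⟩
    | cons d ds =>
      exfalso
      have heq2 : List.replicate k1 0 ++ t1 =
          List.replicate (d-1) 0 ++ (v :: (interF (v+1) ds ++ (List.replicate k2 0 ++ t2))) := by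
        rw [show interF v (d::ds) = List.replicate (d-1) 0 ++ (v :: interF (v+1) ds) from rfl]
          at heq
        simpa [List.append_assoc, interF] using heq
      have hrs := run_split 0 k1 (d-1) t1 _
        (head_ne_of_mem_ge 0 t1 (fun x hx => h1 x hx)) (by right; simp; omega) heq2
      obtain ⟨k2', rfl⟩ : ∃ e, k2 = e + 1 := ⟨k2 - 1, by omega⟩
      have h0 : (0:ℕ) ∈ t1 := by
        rw [hrs.2, List.mem_cons, List.mem_append, List.mem_append]
        right; right; left
        simp
      have := h1 0 h0
      omega
  | cons d1 ds1 ih =>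
    intro c2 v k1 k2 t1 t2 hc1 hc2 hv hk1 hk2 h1 h2 heq
    cases c2 with
    | nil =>
      exfalso
      have heq2 : List.replicate (d1-1) 0 ++ (v :: (interF (v+1) ds1 ++ (List.replicate k1 0 ++ t1))) =
          List.replicate k2 0 ++ t2 := by
        rw [show interF v (d1::ds1) = List.replicate (d1-1) 0 ++ (v :: interF (v+1) ds1) from rfl]
          at heq
        simpa [List.append_assoc, interF] using heq
      have hrs := run_split 0 (d1-1) k2 _ t2
        (by right; simp; omega) (head_ne_of_mem_ge 0 t2 (fun x hx => h2 x hx)) heq2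
      obtain ⟨k1', rfl⟩ : ∃ e, k1 = e + 1 := ⟨k1 - 1, by omega⟩
      have h0 : (0:ℕ) ∈ t2 := by
        rw [← hrs.2, List.mem_cons, List.mem_append, List.mem_append]
        right; right; left
        simp
      have := h2 0 h0
      omega
    | cons d2 ds2 =>
      have heq2 : List.replicate (d1-1) 0 ++ (v :: (interF (v+1) ds1 ++ (List.replicate k1 0 ++ t1))) =
          List.replicate (d2-1) 0 ++ (v :: (interF (v+1) ds2 ++ (List.replicate k2 0 ++ t2))) := by
        rw [show interF v (d1::ds1) = List.replicate (d1-1) 0 ++ (v :: interF (v+1) ds1) from rfl,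
          show interF v (d2::ds2) = List.replicate (d2-1) 0 ++ (v :: interF (v+1) ds2) from rfl]
          at heq
        simpa [List.append_assoc] using heq
      have hrs := run_split 0 (d1-1) (d2-1) _ _
        (by right; simp; omega) (by right; simp; omega) heq2
      have htl := (List.cons.inj hrs.2).2
      have := ih ds2 (v+1) k1 k2 t1 t2 (fun x hx => hc1 x (by simp [hx]))
        (fun x hx => hc2 x (by simp [hx])) (by omega) hk1 hk2 h1 h2 htl
      have hd : d1 = d2 := by
        have e1 := hc1 d1 (by simp)
        have e2 := hc2 d2 (by simp)
        have := hrs.1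
        omega
      rw [hd, this.1, this.2.1, this.2.2]
      exact ⟨rfl, rfl, rfl⟩

lemma injB (n : ℕ) : Set.InjOn wB (PA n) := by
  rintro ⟨c1, k1, t1⟩ hp1 ⟨c2, k2, t2⟩ hp2 heq
  obtain ⟨hc1, hk1, ht1, -⟩ := hp1
  obtain ⟨hc2, hk2, ht2, -⟩ := hp2
  replace hc1 : ∀ x ∈ c1, 1 ≤ x := hc1
  replace hk1 : c1 = [] ∨ 1 ≤ k1 := hk1
  replace ht1 : tOK c1.length t1 := ht1
  replace hc2 : ∀ x ∈ c2, 1 ≤ x := hc2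
  replace hk2 : c2 = [] ∨ 1 ≤ k2 := hk2
  replace ht2 : tOK c2.length t2 := ht2
  have hp1t : ∀ x ∈ t1, 0 < x := fun x hx => (ht1.1 x hx).1
  have hp2t : ∀ x ∈ t2, 0 < x := fun x hx => (ht2.1 x hx).1
  have heq2 : (0:ℕ) :: (interF 1 c1 ++ (List.replicate k1 0 ++ t1)) =
      0 :: (interF 1 c2 ++ (List.replicate k2 0 ++ t2)) := heq
  have heq' := (List.cons.inj heq2).2
  rcases Nat.eq_zero_or_pos k1 with rfl | hk1p
  · have hc1n : c1 = [] := by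
      rcases hk1 with h | h
      · exact h
      · omega
    subst hc1n
    have heq3 : t1 = interF 1 c2 ++ (List.replicate k2 0 ++ t2) := by
      simpa [interF] using heq'
    rcases Nat.eq_zero_or_pos k2 with rfl | hk2p
    · have hc2n : c2 = [] := by
        rcases hk2 with h | h
        · exact h
        · omega
      subst hc2n
      simp [stairF, interF] at heq3
      rw [heq3]
    · exfalso
      obtain ⟨k2', rfl⟩ : ∃ d, k2 = d + 1 := ⟨k2 - 1, by omega⟩
      have h0 : (0:ℕ) ∈ t1 := by
        rw [heq3, List.mem_append, List.mem_append]
        right; left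
        simp
      have := hp1t 0 h0
      omega
  · rcases Nat.eq_zero_or_pos k2 with rfl | hk2p
    · have hc2n : c2 = [] := by
        rcases hk2 with h | h
        · exact h
        · omega
      subst hc2n
      have heq3 : interF 1 c1 ++ (List.replicate k1 0 ++ t1) = t2 := by
        simpa [interF] using heq'
      exfalso
      obtain ⟨k1', rfl⟩ : ∃ d, k1 = d + 1 := ⟨k1 - 1, by omega⟩
      have h0 : (0:ℕ) ∈ t2 := by
        rw [← heq3, List.mem_append, List.mem_append]
        right; left
        simp
      have := hp2t 0 h0
      omega
    · have := injB_aux c1 c2 1 k1 k2 t1 t2 hc1 hc2 (by omega) hk1p hk2p hp1t hp2t heq'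
      rw [this.1, this.2.1, this.2.2]

/- ## conversion lemmas -/
lemma stair_ex (l : List ℕ) : ∀ v : ℕ, (l ≠ [] → l.head? = some v) →
    l.Chain' (fun a b => b = a ∨ b = a + 1) →
    ∃ c : List ℕ, (∀ x ∈ c, 1 ≤ x) ∧ l = stairF v c ∧ c.sum = l.length := by
  induction l with
  | nil => intro v _ _; exact ⟨[], by simp, rfl, rfl⟩
  | cons x l ih =>
    intro v hh hch
    have hx : x = v := by simpa using hh (by simp)
    subst hx
    cases l with
    | nil => exact ⟨[1], by simp, rfl, rfl⟩
    | cons y l2 =>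
      have h1 : y = x ∨ y = x + 1 := (List.isChain_cons_cons.mp hch).1
      have h2 := (List.isChain_cons_cons.mp hch).2
      rcases h1 with h1 | h1
      · obtain ⟨c, hc, hl, hs⟩ := ih x (by intro _; simp [h1]) h2
        cases c with
        | nil => simp [stairF] at hl
        | cons c0 cs =>
          refine ⟨(c0+1) :: cs, ?_, ?_, ?_⟩
          · intro z hz
            rcases List.mem_cons.mp hz with rfl | hz
            · omega
            · exact hc z (by simp [hz])
          · show x :: y :: l2 = List.replicate (c0+1) x ++ stairF (x+1) cs
            rw [hl, List.replicate_succ, List.cons_append]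
            rfl
          · simp only [List.sum_cons, List.length_cons] at hs ⊢
            omega
      · obtain ⟨c, hc, hl, hs⟩ := ih (x+1) (by intro _; simp [h1]) h2
        refine ⟨1 :: c, ?_, ?_, ?_⟩
        · intro z hz
          rcases List.mem_cons.mp hz with rfl | hz
          · omega
          · exact hc z hz
        · show x :: y :: l2 = List.replicate 1 x ++ stairF (x+1) c
          rw [hl]; rfl
        · simp only [List.sum_cons, List.length_cons] at hs ⊢
          omega

lemma asc_le_last (l : List ℕ) : ∀ a : ℕ, (a :: l).Chain' (· ≤ ·) →
    a + ascN (a :: l) ≤ (a :: l).getD l.length 0 := by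
  induction l with
  | nil => intro a _; simp [ascN_single, List.getD]
  | cons b l ih =>
    intro a hch
    rw [ascN_cons_cons]
    have hab : a ≤ b := (List.isChain_cons_cons.mp hch).1
    have h2 := ih b (List.isChain_cons_cons.mp hch).2
    have h3 : (a :: b :: l).getD (b :: l).length 0 = (b :: l).getD l.length 0 := by
      rw [List.length_cons, List.getD_cons_succ]
    rw [h3]
    split <;> omega

lemma pair_sublist (t : List ℕ) (i : ℕ) (hi : i + 1 < t.length) :
    [t.getD i 0, t.getD (i+1) 0].Sublist t := by
  have h1 : t.drop i = t.getD i 0 :: t.drop (i+1) := by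
    rw [List.drop_eq_getElem_cons (by omega), List.getD_eq_getElem _ _ (by omega)]
  have h2 : t.drop (i+1) = t.getD (i+1) 0 :: t.drop (i+2) := by
    rw [List.drop_eq_getElem_cons (by omega), List.getD_eq_getElem _ _ (by omega)]
  have h3 : [t.getD i 0, t.getD (i+1) 0].Sublist (t.drop i) := by
    rw [h1, h2]
    exact List.Sublist.cons₂ _ (List.Sublist.cons₂ _ (List.nil_sublist _))
  exact h3.trans (List.drop_sublist i t)

lemma tOK_last_bound (m : ℕ) (t : List ℕ) (h : tOK m t) (i : ℕ) (hi : i + 1 < t.length) :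
    t.getD (i+1) 0 ≤ m + t.getD i 0 + 1 := by
  have hb := h.2.2 (i+1) hi
  have hlen : (t.take (i+1)).length = i + 1 := by
    rw [List.length_take]; omega
  have hchain : (0 :: t.take (i+1)).Chain' (· ≤ ·) := by
    show List.IsChain _ _
    rw [List.isChain_iff_pairwise, List.pairwise_cons]
    refine ⟨fun b _ => by omega, ?_⟩
    exact (h.2.1).sublist (List.take_sublist _ _)
  have hlast := asc_le_last (t.take (i+1)) 0 hchain
  have hgl : (0 :: t.take (i+1)).getD (t.take (i+1)).length 0 = t.getD i 0 := by
    rw [hlen, List.getD_cons_succ, getD_take_eq _ _ _ (by omega)]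
  rw [hgl] at hlast
  omega

lemma tOK_zero_stair (t : List ℕ) (h : tOK 0 t) :
    ∃ c : List ℕ, (∀ x ∈ c, 1 ≤ x) ∧ t = stairF 1 c ∧ c.sum = t.length := by
  apply stair_ex t 1 ?_ ?_
  · intro hne
    cases t with
    | nil => simp at hne
    | cons x s =>
      have hb := h.2.2 0 (by simp)
      have hp := (h.1 x (by simp)).1
      simp only [List.take_zero, List.getD] at hb
      have hb2 : x ≤ 0 + ascN [0] + 1 := by simpa using hb
      rw [ascN_single] at hb2
      have : x = 1 := by omega
      simp [this]
  · show List.IsChain _ _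
    rw [List.isChain_iff_getElem]
    intro i hi
    have h1 := tOK_last_bound 0 t h i (by omega)
    have h2 := List.pairwise_iff_forall_sublist.mp h.2.1 (pair_sublist t i (by omega))
    rw [← List.getD_eq_getElem t 0 (by omega), ← List.getD_eq_getElem t 0 (by omega)]
    omega

lemma eq_streak (t : List ℕ) : ∀ v : ℕ, (∀ i, i < t.length → t.getD i 0 = v + i) →
    t = stairF v (List.replicate t.length 1) := by
  induction t with
  | nil => intro v _; rfl
  | cons x s ih =>
    intro v hg
    have h0 : x = v := by simpa using hg 0 (by simp)
    have hs := ih (v+1) (fun i hi => by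
      have := hg (i+1) (by simpa using hi)
      rw [List.getD_cons_succ] at this
      omega)
    rw [List.length_cons, List.replicate_succ]
    show x :: s = List.replicate 1 v ++ stairF (v+1) (List.replicate s.length 1)
    rw [← hs, h0]; rfl

lemma tOK_strict_streak (m : ℕ) (t : List ℕ) (h : tOK m t)
    (hh : t ≠ [] → t.getD 0 0 = m + 1)
    (hst : ∀ i, i + 1 < t.length → t.getD i 0 < t.getD (i+1) 0) :
    t = stairF (m+1) (List.replicate t.length 1) := by
  apply eq_streak
  intro i
  induction i with
  | zero =>
    intro h0
    have : t ≠ [] := by intro hh2; rw [hh2] at h0; simp at h0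
    simpa using hh this
  | succ i ih =>
    intro hi
    have hlow := hst i hi
    have hup := h.2.2 (i+1) hi
    have hasc : ascN (0 :: t.take (i+1)) ≤ i + 1 := by
      have h5 := ascN_le_length 0 (t.take (i+1))
      have h6 : (t.take (i+1)).length ≤ i + 1 := by
        rw [List.length_take]; omega
      omega
    have hprev := ih (by omega)
    omega

lemma interF_tail_eq (v k r : ℕ) (hr : 1 ≤ r) :
    interF v ((k+1) :: List.replicate (r-1) 1) =
      List.replicate k 0 ++ stairF v (List.replicate r 1) := by
  obtain ⟨r', rfl⟩ : ∃ d, r = d + 1 := ⟨r - 1, by omega⟩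
  have h1 : k + 1 - 1 = k := by omega
  have h2 : r' + 1 - 1 = r' := by omega
  show List.replicate (k+1-1) 0 ++ v :: interF (v+1) (List.replicate (r'+1-1) 1) = _
  rw [h1, h2, interF_eq_stairF_replicate_one, List.replicate_succ]
  show _ = List.replicate k 0 ++ (List.replicate 1 v ++ stairF (v+1) (List.replicate r' 1))
  rfl

/- ## forward: wA/wB params give members -/
lemma mem_of_getLast?_eq {l : List ℕ} {a : ℕ} (h : l.getLast? = some a) : a ∈ l := by
  obtain ⟨hne, heq⟩ := List.mem_getLast?_eq_getLast (show a ∈ l.getLast? from h)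
  rw [heq]
  exact List.getLast_mem hne

lemma sub_ba_A (a b : ℕ) : [b,a].Sublist [a,a,b,a] := by
  apply List.Sublist.cons
  apply List.Sublist.cons
  apply List.Sublist.cons₂
  apply List.Sublist.cons₂
  exact List.nil_sublist _

lemma sub_ba_B (a b : ℕ) : [b,a].Sublist [a,b,b,a] := by
  apply List.Sublist.cons
  apply List.Sublist.cons₂
  apply List.Sublist.cons
  apply List.Sublist.cons₂
  exact List.nil_sublist _

lemma wA_pairwise (c : List ℕ) (k : ℕ) (t : List ℕ) (hc : ∀ x ∈ c, 1 ≤ x)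
    (htOK : tOK c.length t) :
    (wA (c,k,t)).Pairwise (fun x y => 0 < y → x ≤ y) := by
  show List.Pairwise _ (0 :: (stairF 1 c ++ (List.replicate k 0 ++ t)))
  rw [List.pairwise_cons]
  refine ⟨fun y _ _ => by omega, ?_⟩
  rw [List.pairwise_append]
  refine ⟨List.Pairwise.imp (S := fun x y => 0 < y → x ≤ y) (fun h _ => h)
    (stairF_sorted 1 c), ?_, ?_⟩
  · rw [List.pairwise_append]
    refine ⟨List.pairwise_replicate.mpr (Or.inr (fun _ => le_refl 0)),
      List.Pairwise.imp (S := fun x y => 0 < y → x ≤ y) (fun h _ => h) (htOK.2.1), ?_⟩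
    intro a ha b hb _
    rw [List.eq_of_mem_replicate ha]
    omega
  · intro x hx y hy hy0
    rcases List.mem_append.mp hy with hy | hy
    · rw [List.eq_of_mem_replicate hy] at hy0; omega
    · have h1 := stairF_mem 1 c x hx
      have h2 := (htOK.1 y hy).2
      omega

lemma wB_pairwise (c : List ℕ) (k : ℕ) (t : List ℕ) (hc : ∀ x ∈ c, 1 ≤ x)
    (htOK : tOK c.length t) :
    (wB (c,k,t)).Pairwise (fun x y => 0 < y → x ≤ y) := by
  show List.Pairwise _ (0 :: (interF 1 c ++ (List.replicate k 0 ++ t)))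
  rw [List.pairwise_cons]
  refine ⟨fun y _ _ => by omega, ?_⟩
  rw [List.pairwise_append]
  refine ⟨interF_pairwise 1 c, ?_, ?_⟩
  · rw [List.pairwise_append]
    refine ⟨List.pairwise_replicate.mpr (Or.inr (fun _ => le_refl 0)),
      List.Pairwise.imp (S := fun x y => 0 < y → x ≤ y) (fun h _ => h) (htOK.2.1), ?_⟩
    intro a ha b hb _
    rw [List.eq_of_mem_replicate ha]
    omega
  · intro x hx y hy hy0
    rcases List.mem_append.mp hy with hy | hy
    · rw [List.eq_of_mem_replicate hy] at hy0; omega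
    · have h2 := (htOK.1 y hy).2
      rcases interF_mem 1 c x hx with rfl | h1
      · omega
      · omega

lemma wA_mem (n : ℕ) (p : List ℕ × ℕ × List ℕ) (hp : p ∈ PA n) : wA p ∈ BSet n [0,0,1,0] := by
  obtain ⟨c, k, t⟩ := p
  obtain ⟨hc, hk, htOK, hlen⟩ := hp
  replace hc : ∀ x ∈ c, 1 ≤ x := hc
  replace hk : c = [] ∨ 1 ≤ k := hk
  replace htOK : tOK c.length t := htOK
  replace hlen : 1 + c.sum + k + t.length = n := hlen
  have hPW := wA_pairwise c k t hc htOK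
  refine ⟨?_, ?_, ?_, ?_⟩
  · show (0 :: (stairF 1 c ++ (List.replicate k 0 ++ t))).length = n
    simp only [List.length_cons, List.length_append, List.length_replicate, stairF_length]
    omega
  · rw [show wA (c,k,t) = 0 :: (stairF 1 c ++ (List.replicate k 0 ++ t)) from rfl,
      isAscentSeq_iff]
    rcases hk with rfl | hk
    · show Asc 0 0 (stairF 1 [] ++ (List.replicate k 0 ++ t))
      rw [show stairF 1 [] = [] from rfl, List.nil_append, asc_replicate_zero, ite_self]
      exact tOK_asc _ t htOK
    · obtain ⟨k', rfl⟩ : ∃ d, k = d + 1 := ⟨k - 1, by omega⟩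
      rw [List.replicate_succ, List.cons_append,
        stair_through c 1 0 0 _ hc (by omega) (by omega), Nat.zero_add,
        asc_replicate_zero, ite_self]
      exact tOK_asc _ t htOK
  · exact avoid021_of_pairwise _ hPW
  · intro hcon
    obtain ⟨a, b, hsub, hab⟩ := (containsPat_0010 _).mp hcon
    rcases Nat.eq_zero_or_pos a with rfl | ha
    · have hsub' : [0,0,b,0].Sublist ([0] ++ (stairF 1 c ++ (List.replicate k 0 ++ t))) := hsub
      rw [List.sublist_append_iff] at hsub'
      obtain ⟨l0, rest, heq, hl0, hrest⟩ := hsub'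
      rw [List.sublist_append_iff] at hrest
      obtain ⟨l1, rest2, heq2, hl1, hrest2⟩ := hrest
      rw [List.sublist_append_iff] at hrest2
      obtain ⟨l2, l3, heq3, hl2, hl3⟩ := hrest2
      subst heq3; subst heq2
      have hl0' := List.sublist_singleton.mp hl0
      have hSpos : ∀ x ∈ l1, 0 < x := fun x hx => (stairF_mem 1 c x (hl1.subset hx)).1
      have htpos : ∀ x ∈ l3, 0 < x := fun x hx => (htOK.1 x (hl3.subset hx)).1
      have hZ : ∀ x ∈ l2, x = 0 := fun x hx => List.eq_of_mem_replicate (hl2.subset hx)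
      have hl1nil : l1 = [] := by
        cases l1 with
        | nil => rfl
        | cons x l1' =>
          have hx : 0 < x := hSpos x (by simp)
          rcases hl0' with rfl | rfl
          · rw [List.nil_append, List.cons_append] at heq
            have := (List.cons.inj heq).1
            omega
          · rw [List.singleton_append, List.cons_append] at heq
            have h2 := (List.cons.inj heq).2
            have := (List.cons.inj h2).1
            omega
      subst hl1nil
      have heqfull : ([0,0,b,0] : List ℕ) = (l0 ++ l2) ++ l3 := by
        rw [heq]; simp
      have hb3 : b ∈ l3 := by
        have hbm : b ∈ (l0 ++ l2) ++ l3 := by rw [← heqfull]; simp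
        rcases List.mem_append.mp hbm with hbm | hbm
        · rcases List.mem_append.mp hbm with hbm | hbm
          · rcases hl0' with rfl | rfl
            · simp at hbm
            · simp at hbm; omega
          · have := hZ b hbm; omega
        · exact hbm
      have hne3 : l3 ≠ [] := List.ne_nil_of_mem hb3
      have hlast : l3.getLast? = some 0 := by
        have h0 : (((l0 ++ l2) ++ l3).getLast?) = some 0 := by rw [← heqfull]; rfl
        rw [List.getLast?_append, List.getLast?_eq_getLast_of_ne_nil hne3] at h0
        simp at h0
        rw [List.getLast?_eq_getLast_of_ne_nil hne3, h0]
      have := htpos 0 (mem_of_getLast?_eq hlast)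
      omega
    · have hba : [b,a].Sublist (wA (c,k,t)) := (sub_ba_A a b).trans hsub
      have := List.pairwise_iff_forall_sublist.mp hPW hba ha
      omega

lemma wB_mem (n : ℕ) (p : List ℕ × ℕ × List ℕ) (hp : p ∈ PA n) : wB p ∈ BSet n [0,1,1,0] := by
  obtain ⟨c, k, t⟩ := p
  obtain ⟨hc, hk, htOK, hlen⟩ := hp
  replace hc : ∀ x ∈ c, 1 ≤ x := hc
  replace hk : c = [] ∨ 1 ≤ k := hk
  replace htOK : tOK c.length t := htOK
  replace hlen : 1 + c.sum + k + t.length = n := hlen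
  have hPW := wB_pairwise c k t hc htOK
  refine ⟨?_, ?_, ?_, ?_⟩
  · show (0 :: (interF 1 c ++ (List.replicate k 0 ++ t))).length = n
    simp only [List.length_cons, List.length_append, List.length_replicate, interF_length 1 c hc]
    omega
  · rw [show wB (c,k,t) = 0 :: (interF 1 c ++ (List.replicate k 0 ++ t)) from rfl,
      isAscentSeq_iff]
    rcases hk with rfl | hk
    · show Asc 0 0 (interF 1 [] ++ (List.replicate k 0 ++ t))
      rw [show interF 1 [] = [] from rfl, List.nil_append, asc_replicate_zero, ite_self]
      exact tOK_asc _ t htOK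
    · obtain ⟨k', rfl⟩ : ∃ d, k = d + 1 := ⟨k - 1, by omega⟩
      rw [List.replicate_succ, List.cons_append,
        inter_through c 1 0 0 _ hc (by omega) (by omega), Nat.zero_add,
        asc_replicate_zero, ite_self]
      exact tOK_asc _ t htOK
  · exact avoid021_of_pairwise _ hPW
  · intro hcon
    obtain ⟨a, b, hsub, hab⟩ := (containsPat_0110 _).mp hcon
    rcases Nat.eq_zero_or_pos a with rfl | ha
    · have hsub' : [0,b,b,0].Sublist ([0] ++ (interF 1 c ++ (List.replicate k 0 ++ t))) := hsub
      rw [List.sublist_append_iff] at hsub'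
      obtain ⟨l0, rest, heq, hl0, hrest⟩ := hsub'
      rw [List.sublist_append_iff] at hrest
      obtain ⟨l1, rest2, heq2, hl1, hrest2⟩ := hrest
      rw [List.sublist_append_iff] at hrest2
      obtain ⟨l2, l3, heq3, hl2, hl3⟩ := hrest2
      subst heq3; subst heq2
      have hl0' := List.sublist_singleton.mp hl0
      have htpos : ∀ x ∈ l3, 0 < x := fun x hx => (htOK.1 x (hl3.subset hx)).1
      have hZ : ∀ x ∈ l2, x = 0 := fun x hx => List.eq_of_mem_replicate (hl2.subset hx)
      -- l3 = []
      have hl3nil : l3 = [] := by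
        by_contra hne3
        have heqfull : ([0,b,b,0] : List ℕ) = (l0 ++ l1 ++ l2) ++ l3 := by
          rw [heq]; simp
        have hlast : l3.getLast? = some 0 := by
          have h0 : (((l0 ++ l1 ++ l2) ++ l3).getLast?) = some 0 := by rw [← heqfull]; rfl
          rw [List.getLast?_append, List.getLast?_eq_getLast_of_ne_nil hne3] at h0
          simp at h0
          rw [List.getLast?_eq_getLast_of_ne_nil hne3, h0]
        have := htpos 0 (mem_of_getLast?_eq hlast)
        omega
      subst hl3nil
      -- count b in l1 is 2
      have hcnt : 2 ≤ List.count b l1 := by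
        have hcp : List.count b ([0,b,b,0] : List ℕ) = 2 := by
          simp [List.count_cons]
          split <;> omega
        rw [heq] at hcp
        simp only [List.count_append, List.count_nil] at hcp
        have hc0 : List.count b l0 = 0 := by
          rcases hl0' with rfl | rfl
          · rfl
          · simp [List.count_singleton']
            omega
        have hc2 : List.count b l2 = 0 := by
          rw [List.count_eq_zero]
          intro hb
          have := hZ b hb
          omega
        omega
      have hbb : (List.replicate 2 b).Sublist l1 := List.replicate_sublist_iff.mpr hcnt
      have hbb' : [b,b].Sublist (interF 1 c) := hbb.trans hl1
      have := List.pairwise_iff_forall_sublist.mp (interF_pairwise_lt 1 c) hbb' (by omega) (by omega)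
      omega
    · have hba : [b,a].Sublist (wB (c,k,t)) := (sub_ba_B a b).trans hsub
      have := List.pairwise_iff_forall_sublist.mp hPW hba ha
      omega

/- ## prefix closure -/
lemma bset_dropLast (n : ℕ) (τ w : List ℕ) (h : w ∈ BSet (n+1) τ) (hn : 1 ≤ n) :
    w.dropLast ∈ BSet n τ := by
  obtain ⟨hlen, hasc, h21, hτ⟩ := h
  have hdl : w.dropLast = w.take n := by
    rw [List.dropLast_eq_take, hlen]
    congr 1
  refine ⟨?_, ⟨?_, ?_⟩, ?_, ?_⟩
  · simp [List.length_dropLast, hlen]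
  · intro hne
    cases w with
    | nil => simp at hlen
    | cons w0 w' =>
      have h0 : w0 = 0 := hasc.1 (by simp)
      obtain ⟨n', rfl⟩ : ∃ d, n = d + 1 := ⟨n - 1, by omega⟩
      rw [hdl, List.take_succ_cons]
      simpa using h0
  · intro i hi0 hin
    rw [hdl] at hin ⊢
    rw [List.length_take] at hin
    have hin' : i < n := by omega
    rw [getD_take_eq _ _ _ hin', List.take_take, min_eq_left (by omega)]
    exact hasc.2 i hi0 (by omega)
  · exact fun hc => h21 (containsPat_mono _ _ _ (List.dropLast_sublist w) hc)
  · exact fun hc => hτ (containsPat_mono _ _ _ (List.dropLast_sublist w) hc)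

/- ## the two structure theorems -/
lemma sub_mid (s Y : List ℕ) (x : ℕ) (h : s.Sublist Y) :
    ((0 :: s) ++ [x]).Sublist ((0 :: Y) ++ [x]) :=
  List.Sublist.append (h.cons₂ 0) (List.Sublist.refl [x])

lemma tOK_nil (m : ℕ) : tOK m [] := ⟨by simp, by simp, by simp⟩

lemma mem_PA (n : ℕ) (c : List ℕ) (k : ℕ) (t : List ℕ) (h1 : ∀ x ∈ c, 1 ≤ x)
    (h2 : c = [] ∨ 1 ≤ k) (h3 : tOK c.length t) (h4 : 1 + c.sum + k + t.length = n) :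
    (c, k, t) ∈ PA n := ⟨h1, h2, h3, h4⟩

lemma tOK_snoc (m : ℕ) (t : List ℕ) (x : ℕ) (htOK : tOK m t) (hx : 0 < x) (hmx : m ≤ x)
    (hyle : ∀ y ∈ t, y ≤ x) (hbnd : x ≤ m + ascN (0 :: t) + 1) : tOK m (t ++ [x]) := by
  refine ⟨?_, ?_, ?_⟩
  · intro z hz
    rcases List.mem_append.mp hz with hz | hz
    · exact htOK.1 z hz
    · simp at hz; subst hz; exact ⟨hx, hmx⟩
  · rw [List.pairwise_append]
    refine ⟨htOK.2.1, by simp, ?_⟩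
    intro a ha b hb
    simp at hb; subst hb
    exact hyle a ha
  · intro i hi
    rw [List.length_append, List.length_singleton] at hi
    rcases Nat.lt_or_ge i t.length with hilt | hige
    · rw [List.getD_append _ _ _ _ hilt, List.take_append_of_le_length (by omega)]
      exact htOK.2.2 i hilt
    · have hieq : i = t.length := by omega
      subst hieq
      rw [List.getD_append_right _ _ _ _ (le_refl _), List.take_left]
      simpa using hbnd

lemma setA_eq (n : ℕ) (hn : 1 ≤ n) : BSet n [0,0,1,0] = wA '' PA n := by
  apply Set.eq_of_subset_of_subset
  · induction n, hn using Nat.le_induction with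
    | base =>
      intro w hw
      obtain ⟨hlen, hasc, -, -⟩ := hw
      obtain ⟨a, rfl⟩ := List.length_eq_one_iff.mp hlen
      have ha : a = 0 := hasc.1 (by simp)
      subst ha
      exact ⟨([], 0, []), mem_PA _ _ _ _ (by simp) (Or.inl rfl) (tOK_nil 0) rfl, rfl⟩
    | succ n hn ih =>
      intro w hw
      have hw' := bset_dropLast n _ w hw hn
      obtain ⟨p, hp, hwp⟩ := ih hw'
      obtain ⟨c, k, t⟩ := p
      obtain ⟨hc, hk, htOK, hlenp⟩ := hp
      replace hc : ∀ y ∈ c, 1 ≤ y := hc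
      replace hk : c = [] ∨ 1 ≤ k := hk
      replace htOK : tOK c.length t := htOK
      replace hlenp : 1 + c.sum + k + t.length = n := hlenp
      obtain ⟨hlen, hasc, h21, h0010⟩ := hw
      have hwne : w ≠ [] := by
        intro hh; rw [hh] at hlen; simp at hlen
      obtain ⟨x, hsplit⟩ : ∃ x, w = wA (c, k, t) ++ [x] :=
        ⟨w.getLast hwne, by rw [hwp]; exact (List.dropLast_append_getLast hwne).symm⟩
      have hxle : x ≤ ascN (wA (c,k,t)) + 1 := by
        apply last_le_of_isAscentSeq
        · rw [← hsplit]; exact hasc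
        · exact List.cons_ne_nil _ _
      rw [ascN_wA _ hc hk] at hxle
      replace hxle : x ≤ c.length + ascN (0 :: t) + 1 := hxle
      rcases Nat.eq_zero_or_pos x with hx0 | hxpos
      · subst hx0
        cases t with
        | nil =>
          refine ⟨(c, k+1, []), mem_PA _ _ _ _ hc (Or.inr (by omega)) (tOK_nil _) (by
            simp only [List.length_nil] at hlenp ⊢; omega), ?_⟩
          rw [hsplit]
          show 0 :: (stairF 1 c ++ (List.replicate (k+1) 0 ++ [])) =
            (0 :: (stairF 1 c ++ (List.replicate k 0 ++ []))) ++ [0]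
          rw [List.replicate_succ' (n := k) (a := 0)]
          simp
        | cons t0 ts =>
          have ht0pos : 0 < t0 := (htOK.1 t0 (by simp)).1
          have hknot : k = 0 := by
            by_contra hkne
            apply h0010
            rw [containsPat_0010]
            refine ⟨0, t0, ?_, ht0pos⟩
            rw [hsplit]
            apply sub_mid [0, t0] _ 0
            refine List.Sublist.trans ?_ (List.sublist_append_right (stairF 1 c) _)
            show ([0] ++ [t0]).Sublist (List.replicate k 0 ++ (t0 :: ts))
            apply List.Sublist.append
            · exact List.singleton_sublist.mpr (by rw [List.mem_replicate]; exact ⟨by omega, rfl⟩)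
            · exact List.singleton_sublist.mpr (by simp)
          have hcnil : c = [] := by
            rcases hk with h | h
            · exact h
            · omega
          subst hcnil; subst hknot
          obtain ⟨c', hc', hteq, hsum⟩ := tOK_zero_stair (t0 :: ts) htOK
          refine ⟨(c', 1, []), mem_PA _ _ _ _ hc' (Or.inr (le_refl 1)) (tOK_nil _) (by
            simp only [List.length_nil, List.length_cons] at hlenp ⊢
            simp only [List.sum_nil] at hlenp
            rw [hsum]
            simp only [List.length_cons]
            omega), ?_⟩
          rw [hsplit]
          show 0 :: (stairF 1 c' ++ (List.replicate 1 0 ++ [])) =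
            (0 :: (stairF 1 [] ++ (List.replicate 0 0 ++ (t0 :: ts)))) ++ [0]
          rw [← hteq]
          simp [stairF]
      · -- x > 0
        have hmle : c.length ≤ x := by
          by_contra hmx
          push_neg at hmx
          have hcne : c ≠ [] := by
            intro hcn; rw [hcn] at hmx; simp at hmx
          have hmmem : c.length ∈ stairF 1 c := by
            have := stairF_last_mem 1 c hcne hc
            have h2 : 1 + c.length - 1 = c.length := by omega
            rwa [h2] at this
          apply h21
          rw [containsPat_021]
          refine ⟨0, c.length, x, ?_, hxpos, hmx⟩
          rw [hsplit]
          apply sub_mid [c.length] _ x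
          exact (List.singleton_sublist.mpr hmmem).trans (List.sublist_append_left _ _)
        have hyle : ∀ y ∈ t, y ≤ x := by
          intro y hy
          by_contra hxy
          push_neg at hxy
          apply h21
          rw [containsPat_021]
          refine ⟨0, y, x, ?_, hxpos, hxy⟩
          rw [hsplit]
          apply sub_mid [y] _ x
          refine (List.singleton_sublist.mpr ?_).trans (List.sublist_append_right (stairF 1 c) _)
          exact List.mem_append.mpr (Or.inr hy)
        refine ⟨(c, k, t ++ [x]), mem_PA _ _ _ _ hc hk
          (tOK_snoc _ t x htOK hxpos hmle hyle (by omega)) (by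
          simp only [List.length_append, List.length_singleton] at hlenp ⊢; omega), ?_⟩
        rw [hsplit]
        show 0 :: (stairF 1 c ++ (List.replicate k 0 ++ (t ++ [x]))) =
          (0 :: (stairF 1 c ++ (List.replicate k 0 ++ t))) ++ [x]
        simp
  · rintro w ⟨p, hp, rfl⟩
    exact wA_mem n p hp

lemma setB_eq (n : ℕ) (hn : 1 ≤ n) : BSet n [0,1,1,0] = wB '' PA n := by
  apply Set.eq_of_subset_of_subset
  · induction n, hn using Nat.le_induction with
    | base =>
      intro w hw
      obtain ⟨hlen, hasc, -, -⟩ := hw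
      obtain ⟨a, rfl⟩ := List.length_eq_one_iff.mp hlen
      have ha : a = 0 := hasc.1 (by simp)
      subst ha
      exact ⟨([], 0, []), mem_PA _ _ _ _ (by simp) (Or.inl rfl) (tOK_nil 0) rfl, rfl⟩
    | succ n hn ih =>
      intro w hw
      have hw' := bset_dropLast n _ w hw hn
      obtain ⟨p, hp, hwp⟩ := ih hw'
      obtain ⟨c, k, t⟩ := p
      obtain ⟨hc, hk, htOK, hlenp⟩ := hp
      replace hc : ∀ y ∈ c, 1 ≤ y := hc
      replace hk : c = [] ∨ 1 ≤ k := hk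
      replace htOK : tOK c.length t := htOK
      replace hlenp : 1 + c.sum + k + t.length = n := hlenp
      obtain ⟨hlen, hasc, h21, h0110⟩ := hw
      have hwne : w ≠ [] := by
        intro hh; rw [hh] at hlen; simp at hlen
      obtain ⟨x, hsplit⟩ : ∃ x, w = wB (c, k, t) ++ [x] :=
        ⟨w.getLast hwne, by rw [hwp]; exact (List.dropLast_append_getLast hwne).symm⟩
      have hxle : x ≤ ascN (wB (c,k,t)) + 1 := by
        apply last_le_of_isAscentSeq
        · rw [← hsplit]; exact hasc
        · exact List.cons_ne_nil _ _
      rw [ascN_wB _ hc hk] at hxle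
      replace hxle : x ≤ c.length + ascN (0 :: t) + 1 := hxle
      rcases Nat.eq_zero_or_pos x with hx0 | hxpos
      · subst hx0
        cases t with
        | nil =>
          refine ⟨(c, k+1, []), mem_PA _ _ _ _ hc (Or.inr (by omega)) (tOK_nil _) (by
            simp only [List.length_nil] at hlenp ⊢; omega), ?_⟩
          rw [hsplit]
          show 0 :: (interF 1 c ++ (List.replicate (k+1) 0 ++ [])) =
            (0 :: (interF 1 c ++ (List.replicate k 0 ++ []))) ++ [0]
          rw [List.replicate_succ' (n := k) (a := 0)]
          simp
        | cons t0 ts =>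
          have ht0pos : 0 < t0 := (htOK.1 t0 (by simp)).1
          by_cases hstrict : ∀ i, i + 1 < (t0 :: ts).length →
              (t0 :: ts).getD i 0 < (t0 :: ts).getD (i+1) 0
          · -- strict
            have ht0ub : t0 ≤ c.length + 1 := by
              have := htOK.2.2 0 (by simp)
              simpa [ascN_single] using this
            have ht0lb : c.length ≤ t0 := (htOK.1 t0 (by simp)).2
            rcases Nat.eq_or_lt_of_le ht0lb with ht0eq | ht0lt
            · -- t0 = c.length : pattern [0, m, m, 0]
              exfalso
              have hm1 : 1 ≤ c.length := by omega
              have hcne : c ≠ [] := by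
                intro hcn; rw [hcn] at hm1; simp at hm1
              have hmmem : c.length ∈ interF 1 c := by
                have := interF_last_mem 1 c hcne
                have h2 : 1 + c.length - 1 = c.length := by omega
                rwa [h2] at this
              apply h0110
              rw [containsPat_0110]
              refine ⟨0, c.length, ?_, by omega⟩
              rw [hsplit]
              apply sub_mid [c.length, c.length] _ 0
              show ([c.length] ++ [c.length]).Sublist
                (interF 1 c ++ (List.replicate k 0 ++ (t0 :: ts)))
              apply List.Sublist.append
              · exact List.singleton_sublist.mpr hmmem
              · refine List.Sublist.trans ?_ (List.sublist_append_right (List.replicate k 0) _)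
                exact List.singleton_sublist.mpr (by rw [← ht0eq]; simp)
            · -- t0 = c.length + 1 : convert
              have ht0e : t0 = c.length + 1 := by omega
              have hteq := tOK_strict_streak c.length (t0 :: ts) htOK
                (fun _ => by simpa using ht0e) hstrict
              set r := (t0 :: ts).length with hrdef
              have hr1 : 1 ≤ r := by simp [hrdef]
              refine ⟨(c ++ (k+1) :: List.replicate (r-1) 1, 1, []),
                mem_PA _ _ _ _ ?_ (Or.inr (le_refl 1)) (tOK_nil _) ?_, ?_⟩
              · intro y hy
                rcases List.mem_append.mp hy with hy | hy
                · exact hc y hy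
                · rcases List.mem_cons.mp hy with rfl | hy
                  · omega
                  · rw [List.eq_of_mem_replicate hy]
              · simp only [List.sum_append, List.sum_cons, List.sum_replicate, smul_eq_mul,
                  mul_one, List.length_nil]
                simp only [hrdef, List.length_cons] at hlenp ⊢
                omega
              · rw [hsplit]
                show 0 :: (interF 1 (c ++ (k+1) :: List.replicate (r-1) 1) ++
                    (List.replicate 1 0 ++ [])) =
                  (0 :: (interF 1 c ++ (List.replicate k 0 ++ (t0 :: ts)))) ++ [0]
                rw [interF_append, interF_tail_eq (1 + c.length) k r hr1,
                  Nat.add_comm 1 c.length, ← hteq]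
                simp
          · -- not strict: equal adjacent pair
            exfalso
            push_neg at hstrict
            obtain ⟨i, hilt, hge⟩ := hstrict
            have hle2 := List.pairwise_iff_forall_sublist.mp htOK.2.1
              (pair_sublist (t0 :: ts) i hilt)
            have heqv : (t0 :: ts).getD i 0 = (t0 :: ts).getD (i+1) 0 := by omega
            have hymem : (t0 :: ts).getD i 0 ∈ (t0 :: ts) := by
              rw [List.getD_eq_getElem _ 0 (by omega)]
              exact List.getElem_mem _
            have hypos : 0 < (t0 :: ts).getD i 0 := (htOK.1 _ hymem).1
            apply h0110
            rw [containsPat_0110]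
            refine ⟨0, (t0 :: ts).getD i 0, ?_, hypos⟩
            rw [hsplit]
            apply sub_mid [(t0 :: ts).getD i 0, (t0 :: ts).getD i 0] _ 0
            have hsub2 : [(t0 :: ts).getD i 0, (t0 :: ts).getD i 0].Sublist (t0 :: ts) := by
              have := pair_sublist (t0 :: ts) i hilt
              rwa [← heqv] at this
            refine hsub2.trans ?_
            refine List.Sublist.trans ?_ (List.sublist_append_right (interF 1 c) _)
            exact List.sublist_append_right _ _
      · -- x > 0
        have hmle : c.length ≤ x := by
          by_contra hmx
          push_neg at hmx
          have hcne : c ≠ [] := by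
            intro hcn; rw [hcn] at hmx; simp at hmx
          have hmmem : c.length ∈ interF 1 c := by
            have := interF_last_mem 1 c hcne
            have h2 : 1 + c.length - 1 = c.length := by omega
            rwa [h2] at this
          apply h21
          rw [containsPat_021]
          refine ⟨0, c.length, x, ?_, hxpos, hmx⟩
          rw [hsplit]
          apply sub_mid [c.length] _ x
          exact (List.singleton_sublist.mpr hmmem).trans (List.sublist_append_left _ _)
        have hyle : ∀ y ∈ t, y ≤ x := by
          intro y hy
          by_contra hxy
          push_neg at hxy
          apply h21
          rw [containsPat_021]
          refine ⟨0, y, x, ?_, hxpos, hxy⟩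
          rw [hsplit]
          apply sub_mid [y] _ x
          refine (List.singleton_sublist.mpr ?_).trans (List.sublist_append_right (interF 1 c) _)
          exact List.mem_append.mpr (Or.inr hy)
        refine ⟨(c, k, t ++ [x]), mem_PA _ _ _ _ hc hk
          (tOK_snoc _ t x htOK hxpos hmle hyle (by omega)) (by
          simp only [List.length_append, List.length_singleton] at hlenp ⊢; omega), ?_⟩
        rw [hsplit]
        show 0 :: (interF 1 c ++ (List.replicate k 0 ++ (t ++ [x]))) =
          (0 :: (interF 1 c ++ (List.replicate k 0 ++ t))) ++ [x]
        simp
  · rintro w ⟨p, hp, rfl⟩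
    exact wB_mem n p hp


lemma not_containsPat_nil (τ : List ℕ) (hτ : τ ≠ []) : ¬ ContainsPat [] τ := by
  rintro ⟨s, hsub, hlen, -⟩
  rw [List.sublist_nil] at hsub
  subst hsub
  simp at hlen
  exact hτ (List.length_eq_zero_iff.mp hlen.symm)

lemma bset_zero (τ : List ℕ) (hτ : τ ≠ []) : BSet 0 τ = {([] : List ℕ)} := by
  ext w
  simp only [BSet, Set.mem_setOf_eq, Set.mem_singleton_iff]
  constructor
  · rintro ⟨hlen, -⟩
    exact List.length_eq_zero_iff.mp hlen
  · rintro rfl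
    refine ⟨rfl, ⟨fun h => absurd rfl h, fun i h1 h2 => by simp at h2⟩, ?_, ?_⟩
    · exact not_containsPat_nil _ (by simp)
    · exact not_containsPat_nil _ hτ

end CardAux

/-- `B_n(0010)` and `B_n(0110)` are equinumerous. -/
theorem card_0010_eq_0110 (n : ℕ) :
    (BSet n [0,0,1,0]).ncard = (BSet n [0,1,1,0]).ncard := by
  rcases Nat.eq_zero_or_pos n with h | h
  · subst h
    rw [CardAux.bset_zero _ (by simp), CardAux.bset_zero _ (by simp)]
  · rw [CardAux.setA_eq n h, CardAux.setB_eq n h,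
      Set.ncard_image_of_injOn (CardAux.injA n), Set.ncard_image_of_injOn (CardAux.injB n)]
end
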